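/- arXiv:1003.5326 — 10 statements merged into one kernel-verified Lean document; each statement's English description precedes it below -/
import Mathlib

section
/- Every capacitated valuation satisfies the gross substitutes condition: let G be a finite set of goods, w : G → ℝ nonnegative per-item values, c ∈ ℕ a capacity, and let v be the induced capacitated valuation. For any two price vectors p, q : G → ℝ with p j ≤ q j for every good j, and for any bundle S_p in the demand set D(p), there exists a bundle S_q in the demand set D(q) such that every good j ∈ S_p with p j = q j also belongs to S_q. -/
/-- The capacitated valuation induced by per-item values `w` and capacity `c`:
the maximum, over subsets `T ⊆ S` with `|T| ≤ c`, of `∑ j ∈ T, w j`. -/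
noncomputable def capVal {G : Type*} [DecidableEq G] (w : G → ℝ) (c : ℕ)
    (S : Finset G) : ℝ :=
  (S.powerset.filter fun T => T.card ≤ c).sup' ⟨∅, by simp⟩ (fun T => ∑ j ∈ T, w j)

/-!
The value of a bundle `S` is attained on some `T ⊆ S` with `|T| ≤ c`. If `Sp` is demanded at `p`
and `Tp` attains its value, exchanging goods shows that every `k ∈ Tp` satisfies
`w k - p k ≥ max (0, w i - max (p i) 0)` for all `i ∉ Tp`. Raising prices to `q` lowers the right
side and leaves the left side alone when `p k = q k`. So any bundle `S` missing such a `k` is weakly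
improved at `q` by adding `k` (if the set attaining `v(S)` has room) or by exchanging `k` for a
good of that set outside `Tp` (which exists, as that set is then at least as large as `Tp`),
without losing the goods of `S ∩ Tp`. The goods of `Sp \ Tp` have nonpositive price and can be
added freely. Hence every bundle is weakly beaten by one containing all goods of `Sp` whose price
did not change, and a best bundle among those is demanded at `q`.
-/

open Finset

section

variable {G : Type*} [DecidableEq G] (w : G → ℝ) (c : ℕ)

noncomputable def utility (r : G → ℝ) (S : Finset G) : ℝ :=
  capVal w c S - ∑ j ∈ S, r j

def IsDemanded (r : G → ℝ) (S : Finset G) : Prop :=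
  ∀ S' : Finset G, utility w c r S' ≤ utility w c r S

structure IsOptimalSubset (S T : Finset G) : Prop where
  subset : T ⊆ S
  card_le : #T ≤ c
  capVal_eq : capVal w c S = ∑ j ∈ T, w j

theorem exists_isOptimalSubset (S : Finset G) : ∃ T, IsOptimalSubset w c S T := by
  obtain ⟨T, hT, h⟩ := exists_mem_eq_sup' (s := S.powerset.filter fun T => #T ≤ c) ⟨∅, by simp⟩
    (fun T => ∑ j ∈ T, w j)
  rw [mem_filter, mem_powerset] at hT
  exact ⟨T, hT.1, hT.2, h⟩

variable {w c}

theorem sum_le_capVal {S T : Finset G} (hTS : T ⊆ S) (hTc : #T ≤ c) :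
    ∑ j ∈ T, w j ≤ capVal w c S :=
  le_sup' (fun T => ∑ j ∈ T, w j) (mem_filter.2 ⟨mem_powerset.2 hTS, hTc⟩)

theorem capVal_mono {S S' : Finset G} (h : S ⊆ S') : capVal w c S ≤ capVal w c S' := by
  obtain ⟨T, hTS, hTc, hT⟩ := exists_isOptimalSubset w c S
  exact hT ▸ sum_le_capVal (hTS.trans h) hTc

theorem utility_le_utility_union {r : G → ℝ} {S E : Finset G} (hE : ∀ j ∈ E, r j ≤ 0) :
    utility w c r S ≤ utility w c r (S ∪ E) := by
  have hcap : capVal w c S ≤ capVal w c (S ∪ E) := capVal_mono subset_union_left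
  have hE' : ∑ j ∈ E \ S, r j ≤ 0 := sum_nonpos fun j hj => hE j (mem_sdiff.1 hj).1
  have hsum : ∑ j ∈ S ∪ E, r j = ∑ j ∈ S, r j + ∑ j ∈ E \ S, r j := by
    rw [← sum_union disjoint_sdiff, union_sdiff_self_eq_union]
  rw [utility, utility, hsum]
  linarith

namespace IsOptimalSubset

variable {S S' T : Finset G} {i k : G}

theorem capVal_sub_add_le (hT : IsOptimalSubset w c S T) (hi : i ∈ T) (hk : k ∉ T)
    (hS' : insert k (T.erase i) ⊆ S') : capVal w c S - w i + w k ≤ capVal w c S' := by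
  have hcard : #(insert k (T.erase i)) ≤ c := by
    have := card_erase_add_one hi
    have := card_insert_le k (T.erase i)
    have := hT.card_le
    omega
  have h := sum_le_capVal (w := w) hS' hcard
  rw [sum_insert fun h => hk (mem_of_mem_erase h), sum_erase_eq_sub hi] at h
  rw [hT.capVal_eq]
  linarith

theorem utility_add_le_insert (r : G → ℝ) (hT : IsOptimalSubset w c S T) (hTc : #T < c)
    (hk : k ∉ S) : utility w c r S + (w k - r k) ≤ utility w c r (insert k S) := by
  have h := sum_le_capVal (w := w) (insert_subset_insert k hT.subset)
    ((card_insert_le k T).trans hTc)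
  rw [sum_insert fun h => hk (hT.subset h)] at h
  rw [utility, utility, sum_insert hk, hT.capVal_eq]
  linarith

theorem exists_exchange (r : G → ℝ) (hT : IsOptimalSubset w c S T) (hi : i ∈ T) (hk : k ∉ S) :
    ∃ S', S.erase i ⊆ S' ∧ k ∈ S' ∧
      utility w c r S + (w k - r k) - (w i - max (r i) 0) ≤ utility w c r S' := by
  have hkT : k ∉ T := fun h => hk (hT.subset h)
  have hswap : insert k (T.erase i) ⊆ insert k S := insert_subset_insert k
    ((erase_subset i T).trans hT.subset)
  rcases le_or_gt (r i) 0 with hri | hri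
  · refine ⟨insert k S, (erase_subset i S).trans (subset_insert k S), mem_insert_self k S, ?_⟩
    have h := hT.capVal_sub_add_le hi hkT hswap
    rw [utility, utility, sum_insert hk, max_eq_right hri]
    linarith
  · have hkS : k ∉ S.erase i := fun h => hk (mem_of_mem_erase h)
    refine ⟨insert k (S.erase i), subset_insert k _, mem_insert_self k _, ?_⟩
    have h := hT.capVal_sub_add_le hi hkT (insert_subset_insert k (erase_subset_erase i hT.subset))
    rw [utility, utility, sum_insert hkS, sum_erase_eq_sub (hT.subset hi), max_eq_left hri.le]
    linarith

end IsOptimalSubset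

namespace IsDemanded

variable {r : G → ℝ} {S T : Finset G} {i k : G}

theorem mem_of_pos (hS : IsDemanded w c r S) (hT : IsOptimalSubset w c S T) (hk : k ∈ S)
    (hrk : 0 < r k) : k ∈ T := by
  by_contra hkT
  have hcap := sum_le_capVal (w := w) (subset_erase.2 ⟨hT.subset, hkT⟩) hT.card_le
  have h := hS (S.erase k)
  rw [utility, utility, sum_erase_eq_sub hk, hT.capVal_eq] at h
  linarith

theorem le_of_mem (hS : IsDemanded w c r S) (hT : IsOptimalSubset w c S T) (hk : k ∈ T) :
    r k ≤ w k := by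
  have hcap := sum_le_capVal (w := w) (erase_subset_erase k hT.subset)
    (card_erase_le.trans hT.card_le)
  have h := hS (S.erase k)
  rw [sum_erase_eq_sub hk] at hcap
  rw [utility, utility, sum_erase_eq_sub (hT.subset hk), hT.capVal_eq] at h
  linarith

theorem sub_max_le (hS : IsDemanded w c r S) (hT : IsOptimalSubset w c S T) (hk : k ∈ T)
    (hi : i ∉ T) : w i - max (r i) 0 ≤ w k - r k := by
  have hik : i ≠ k := fun h => hi (h ▸ hk)
  by_cases hiS : i ∈ S
  · have hcap := hT.capVal_sub_add_le hk hi
      (insert_subset (mem_erase.2 ⟨hik, hiS⟩) (erase_subset_erase k hT.subset))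
    have h := hS (S.erase k)
    rw [utility, utility, sum_erase_eq_sub (hT.subset hk)] at h
    linarith [le_max_right (r i) 0]
  · have hiS' : i ∉ S.erase k := fun h => hiS (mem_of_mem_erase h)
    have hcap := hT.capVal_sub_add_le hk hi (insert_subset_insert i (erase_subset_erase k hT.subset))
    have h := hS (insert i (S.erase k))
    rw [utility, utility, sum_insert hiS', sum_erase_eq_sub (hT.subset hk)] at h
    linarith [le_max_left (r i) 0]

variable {p q : G → ℝ} {Sp Tp : Finset G}

theorem exists_utility_le_of_mem (hSp : IsDemanded w c p Sp) (hTp : IsOptimalSubset w c Sp Tp)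
    (hpq : ∀ j, p j ≤ q j) (hk : k ∈ Tp) (hpqk : p k = q k) (S : Finset G) :
    ∃ S', S ∩ Tp ⊆ S' ∧ k ∈ S' ∧ utility w c q S ≤ utility w c q S' := by
  by_cases hkS : k ∈ S
  · exact ⟨S, inter_subset_left, hkS, le_rfl⟩
  have hwk := hSp.le_of_mem hTp hk
  obtain ⟨T, hT⟩ := exists_isOptimalSubset w c S
  rcases lt_or_ge #T c with hTc | hTc
  · exact ⟨insert k S, inter_subset_left.trans (subset_insert k S), mem_insert_self k S,
      by linarith [hT.utility_add_le_insert q hTc hkS]⟩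
  obtain ⟨i, hiT, hiTp⟩ : ∃ i ∈ T, i ∉ Tp := by
    by_contra! hTTp
    exact hkS (hT.subset (eq_of_subset_of_card_le hTTp (hTp.card_le.trans hTc) ▸ hk))
  obtain ⟨S', hS', hkS', hle⟩ := hT.exists_exchange q hiT hkS
  refine ⟨S', fun j hj => hS' (mem_erase.2 ⟨?_, (mem_inter.1 hj).1⟩), hkS', ?_⟩
  · rintro rfl
    exact hiTp (mem_inter.1 hj).2
  · have hgain := hSp.sub_max_le hTp hk hiTp
    have hmax : max (p i) 0 ≤ max (q i) 0 := max_le_max_right 0 (hpq i)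
    linarith

theorem exists_superset_utility_le (hSp : IsDemanded w c p Sp) (hTp : IsOptimalSubset w c Sp Tp)
    (hpq : ∀ j, p j ≤ q j) (A : Finset G) (hA : ∀ j ∈ A, j ∈ Tp ∧ p j = q j) (S : Finset G) :
    ∃ S', A ⊆ S' ∧ utility w c q S ≤ utility w c q S' := by
  induction A using Finset.induction_on generalizing S with
  | empty => exact ⟨S, empty_subset S, le_rfl⟩
  | insert k A _ ih =>
    obtain ⟨S₁, hAS₁, hS₁⟩ := ih (fun j hj => hA j (mem_insert_of_mem hj)) S
    obtain ⟨hkTp, hpqk⟩ := hA k (mem_insert_self k A)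
    obtain ⟨S₂, hS₂, hkS₂, hS₂le⟩ := hSp.exists_utility_le_of_mem hTp hpq hkTp hpqk S₁
    refine ⟨S₂, insert_subset hkS₂ fun j hj => hS₂ (mem_inter.2 ⟨hAS₁ hj, ?_⟩), hS₁.trans hS₂le⟩
    exact (hA j (mem_insert_of_mem hj)).1

theorem exists_superset_filter_utility_le (hSp : IsDemanded w c p Sp) (hpq : ∀ j, p j ≤ q j)
    (S : Finset G) :
    ∃ S', Sp.filter (fun j => p j = q j) ⊆ S' ∧ utility w c q S ≤ utility w c q S' := by
  obtain ⟨Tp, hTp⟩ := exists_isOptimalSubset w c Sp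
  obtain ⟨S', hS', hle⟩ := hSp.exists_superset_utility_le hTp hpq (Tp.filter fun j => p j = q j)
    (fun j hj => mem_filter.1 hj) S
  have hE : ∀ j ∈ (Sp \ Tp).filter (fun j => p j = q j), q j ≤ 0 := by
    intro j hj
    obtain ⟨hj, hpqj⟩ := mem_filter.1 hj
    rw [← hpqj]
    exact not_lt.1 fun hpj => (mem_sdiff.1 hj).2 (hSp.mem_of_pos hTp (mem_sdiff.1 hj).1 hpj)
  refine ⟨S' ∪ (Sp \ Tp).filter (fun j => p j = q j), fun j hj => ?_,
    hle.trans (utility_le_utility_union hE)⟩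
  obtain ⟨hjSp, hpqj⟩ := mem_filter.1 hj
  by_cases hjTp : j ∈ Tp
  · exact mem_union_left _ (hS' (mem_filter.2 ⟨hjTp, hpqj⟩))
  · exact mem_union_right _ (mem_filter.2 ⟨mem_sdiff.2 ⟨hjSp, hjTp⟩, hpqj⟩)

end IsDemanded

end

theorem capacitated_gross_substitutes_general {G : Type*} [Fintype G] [DecidableEq G]
    (w : G → ℝ) (c : ℕ)
    (p q : G → ℝ) (hpq : ∀ j, p j ≤ q j)
    (Sp : Finset G)
    (hSp : ∀ S : Finset G,
      capVal w c S - ∑ j ∈ S, p j ≤ capVal w c Sp - ∑ j ∈ Sp, p j) :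
    ∃ Sq : Finset G,
      (∀ S : Finset G,
        capVal w c S - ∑ j ∈ S, q j ≤ capVal w c Sq - ∑ j ∈ Sq, q j) ∧
      (∀ j ∈ Sp, p j = q j → j ∈ Sq) := by
  have hSp' : IsDemanded w c p Sp := hSp
  obtain ⟨Sq, hSqK, hSq⟩ := exists_max_image
    (univ.filter fun S => Sp.filter (fun j => p j = q j) ⊆ S) (utility w c q)
    ⟨_, mem_filter.2 ⟨mem_univ _, subset_rfl⟩⟩
  refine ⟨Sq, fun S => ?_, fun j hj hpqj => (mem_filter.1 hSqK).2 (mem_filter.2 ⟨hj, hpqj⟩)⟩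
  obtain ⟨S', hS'K, hle⟩ := hSp'.exists_superset_filter_utility_le hpq S
  exact hle.trans (hSq S' (mem_filter.2 ⟨mem_univ _, hS'K⟩))

/-- Every capacitated valuation satisfies the gross substitutes condition. -/
theorem capacitated_gross_substitutes {G : Type*} [Fintype G] [DecidableEq G]
    (w : G → ℝ) (hw : ∀ j, 0 ≤ w j) (c : ℕ)
    (p q : G → ℝ) (hpq : ∀ j, p j ≤ q j)
    (Sp : Finset G)
    (hSp : ∀ S : Finset G,
      capVal w c S - ∑ j ∈ S, p j ≤ capVal w c Sp - ∑ j ∈ Sp, p j) :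
    ∃ Sq : Finset G,
      (∀ S : Finset G,
        capVal w c S - ∑ j ∈ S, q j ≤ capVal w c Sq - ∑ j ∈ Sq, q j) ∧
      (∀ j ∈ Sp, p j = q j → j ∈ Sq) :=
  capacitated_gross_substitutes_general w c p q hpq Sp hSp
end

section
/- Every allocation problem with capacitated valuations admits a Walrasian equilibrium: for any finite set G of goods and any n agents, agent i having nonnegative per-item values w_i : G → ℝ and capacity c_i ∈ ℕ with induced capacitated valuation v_i, there exist nonnegative item prices p : G → ℝ and pairwise disjoint bundles a_1, …, a_n ⊆ G such that for every agent i the bundle a_i maximizes v_i(S) − Σ_{j∈S} p j over all bundles S ⊆ G, and every good not contained in any a_i has price 0. -/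
open Finset Filter Topology

section MendelsohnDulmage

variable {L R : Type*} [Fintype L] [Fintype R] [DecidableEq L] [DecidableEq R]
  (r : L → R → Prop) [DecidableRel r] (X : Finset L) (Y : Finset R)

/-- Matchings of `r` covering `X` and `Y` are the perfect matchings of `coverRel r X Y`: a vertex
outside `X` (or `Y`) may be matched to its own copy on the other side, and the copies are matched
among themselves. -/
def coverRel : L ⊕ R → R ⊕ L → Prop
  | .inl a, .inl b => r a b
  | .inl a, .inr a' => a' = a ∧ a ∉ X
  | .inr b, .inl b' => b' = b ∧ b ∉ Y
  | .inr _, .inr _ => True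

instance : DecidableRel (coverRel r X Y)
  | .inl _, .inl _ | .inl _, .inr _ | .inr _, .inl _ | .inr _, .inr _ => by
    unfold coverRel; infer_instance

variable {r X Y}

theorem card_le_card_coverRel_image (hX : ∀ A ⊆ X, #A ≤ #{b | ∃ a ∈ A, r a b})
    (hY : ∀ B ⊆ Y, #B ≤ #{a | ∃ b ∈ B, r a b}) (A : Finset (L ⊕ R)) :
    #A ≤ #{β | ∃ α ∈ A, coverRel r X Y α β} := by
  set N : Finset R := {b | ∃ a ∈ A.toLeft, r a b}
  rw [← card_toLeft_add_card_toRight]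
  rcases A.toRight.eq_empty_or_nonempty with hR | ⟨b₀, hb₀⟩
  · calc #A.toLeft + #A.toRight = #(A.toLeft ∩ X) + #(A.toLeft \ X) := by
          rw [hR, card_empty, add_zero, card_inter_add_card_sdiff]
      _ ≤ #N + #(A.toLeft \ X) := by
          gcongr
          refine (hX _ inter_subset_right).trans (card_le_card fun b => ?_)
          simp only [mem_filter, mem_univ, true_and, mem_inter, N]
          exact fun ⟨a, ha, hab⟩ => ⟨a, ha.1, hab⟩
      _ = #(N.disjSum (A.toLeft \ X)) := (card_disjSum ..).symm
      _ ≤ _ := card_le_card fun β hβ => by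
          rcases β with b | a
          · obtain ⟨a, ha, hab⟩ := by simpa [N] using hβ
            exact mem_filter.2 ⟨mem_univ _, .inl a, by simpa using ha, hab⟩
          · obtain ⟨ha, haX⟩ := by simpa using hβ
            exact mem_filter.2 ⟨mem_univ _, .inl a, by simpa using ha, rfl, haX⟩
  · -- The vertices of `Y` missed by `N` have all their neighbours outside `A.toLeft`.
    set B := (A.toRight ∩ Y) \ N
    have hB : #B ≤ #A.toLeftᶜ := by
      refine (hY B (sdiff_subset.trans inter_subset_right)).trans (card_le_card fun a => ?_)
      simp only [mem_filter, mem_univ, true_and, mem_compl]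
      rintro ⟨b, hb, hab⟩ ha
      refine (mem_sdiff.1 hb).2 ?_
      simp only [N, mem_filter, mem_univ, true_and]
      exact ⟨a, ha, hab⟩
    rw [card_compl] at hB
    have hRB : #A.toRight ≤ #(N ∪ (A.toRight \ Y)) + #B :=
      (card_le_card fun b hb => by by_cases b ∈ N <;> by_cases b ∈ Y <;> simp_all [B]).trans
        (card_union_le _ _)
    calc #A.toLeft + #A.toRight ≤ #((N ∪ (A.toRight \ Y)).disjSum univ) := by
          rw [card_disjSum, card_univ]; have := card_le_univ A.toLeft; omega
      _ ≤ _ := card_le_card fun β hβ => by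
          rcases β with b | a
          · rcases mem_union.1 (inl_mem_disjSum.1 hβ) with hb | hb
            · obtain ⟨a, ha, hab⟩ := by simpa [N] using hb
              exact mem_filter.2 ⟨mem_univ _, .inl a, by simpa using ha, hab⟩
            · obtain ⟨hb, hbY⟩ := mem_sdiff.1 hb
              exact mem_filter.2 ⟨mem_univ _, .inr b, by simpa using hb, rfl, hbY⟩
          · exact mem_filter.2 ⟨mem_univ _, .inr b₀, by simpa using hb₀, trivial⟩

theorem exists_matching_covering_of_hall (hX : ∀ A ⊆ X, #A ≤ #{b | ∃ a ∈ A, r a b})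
    (hY : ∀ B ⊆ Y, #B ≤ #{a | ∃ b ∈ B, r a b}) :
    ∃ m : L → Option R, (∀ a b, m a = some b → r a b) ∧
      (∀ a a' b, m a = some b → m a' = some b → a = a') ∧
      (∀ a ∈ X, ∃ b, m a = some b) ∧ ∀ b ∈ Y, ∃ a, m a = some b := by
  obtain ⟨F, hFinj, hFrel⟩ := (Fintype.all_card_le_filter_rel_iff_exists_injective
    (coverRel r X Y)).1 (card_le_card_coverRel_image hX hY)
  have hFsurj := hFinj.surjective_of_finite (Equiv.sumComm L R)
  refine ⟨fun a => (F (.inl a)).getLeft?, fun a b hab => ?_, fun a a' b ha ha' => ?_,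
    fun a ha => ?_, fun b hb => ?_⟩
  · have := hFrel (.inl a)
    rw [Sum.getLeft?_eq_some_iff.1 hab] at this
    exact this
  · exact Sum.inl_injective (hFinj ((Sum.getLeft?_eq_some_iff.1 ha).trans
      (Sum.getLeft?_eq_some_iff.1 ha').symm))
  · have := hFrel (.inl a)
    cases h : F (.inl a) with
    | inl b => exact ⟨b, by simp [h]⟩
    | inr a' => rw [h] at this; exact absurd ha this.2
  · obtain ⟨α, hα⟩ := hFsurj (.inl b)
    have := hFrel α
    cases α with
    | inl a => exact ⟨a, by simp [hα]⟩
    | inr b' => rw [hα] at this; obtain ⟨rfl, hb'⟩ := this; exact absurd hb hb'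

end MendelsohnDulmage

section Copies

variable {ι G : Type*} [Fintype G] [DecidableEq G] {c : ι → ℕ}

def copyBundle (m : (Σ i, Fin (c i)) → Option G) (i : ι) : Finset G :=
  {j | ∃ k, m ⟨i, k⟩ = some j}

variable {m : (Σ i, Fin (c i)) → Option G} {i : ι}

theorem mem_copyBundle {j : G} : j ∈ copyBundle m i ↔ ∃ k, m ⟨i, k⟩ = some j := by
  simp [copyBundle]

theorem map_some_copyBundle_subset :
    (copyBundle m i).map .some ⊆ univ.image fun k => m ⟨i, k⟩ := fun o ho => by
  obtain ⟨j, hj, rfl⟩ := mem_map.1 ho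
  obtain ⟨k, hk⟩ := mem_copyBundle.1 hj
  exact mem_image.2 ⟨k, mem_univ _, hk⟩

theorem card_copyBundle_le : #(copyBundle m i) ≤ c i := by
  simpa using (card_le_card map_some_copyBundle_subset).trans card_image_le

theorem card_copyBundle_eq (hinj : ∀ s s' j, m s = some j → m s' = some j → s = s')
    (hfull : ∀ k, ∃ j, m ⟨i, k⟩ = some j) : #(copyBundle m i) = c i := by
  have hinj_i : Function.Injective fun k => m ⟨i, k⟩ := fun k k' hkk' => by
    obtain ⟨j, hj⟩ := hfull k
    exact eq_of_heq (Sigma.mk.inj (hinj ⟨i, k⟩ ⟨i, k'⟩ j hj (hkk'.symm.trans hj))).2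
  refine le_antisymm card_copyBundle_le ?_
  calc c i = #(univ.image fun k => m ⟨i, k⟩) := by simp [card_image_of_injective _ hinj_i]
    _ ≤ #((copyBundle m i).map .some) := card_le_card fun o ho => by
        obtain ⟨k, -, rfl⟩ := mem_image.1 ho
        obtain ⟨j, hj⟩ := hfull k
        exact mem_map.2 ⟨j, mem_copyBundle.2 ⟨k, hj⟩, hj.symm⟩
    _ = #(copyBundle m i) := card_map _

end Copies

theorem exists_capacitated_matching {ι G : Type*} [Fintype ι] [DecidableEq ι] [Fintype G]
    [DecidableEq G] (c : ι → ℕ) (pool : ι → Finset G) (F : Finset ι) (P : Finset G)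
    (hF : ∀ I ⊆ F, ∑ i ∈ I, c i ≤ #(I.biUnion pool))
    (hP : ∀ J ⊆ P, #J ≤ ∑ i with ¬Disjoint (pool i) J, c i) :
    ∃ a : ι → Finset G, (∀ i, a i ⊆ pool i) ∧ (∀ i, #(a i) ≤ c i) ∧
      (∀ i ∈ F, #(a i) = c i) ∧
      (∀ i k, i ≠ k → Disjoint (a i) (a k)) ∧ ∀ j ∈ P, ∃ i, j ∈ a i := by
  have hcopies (I : Finset ι) :
      #(I.sigma fun i => (univ : Finset (Fin (c i)))) = ∑ i ∈ I, c i := by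
    simp [card_sigma]
  let r : (Σ i, Fin (c i)) → G → Prop := fun s j => j ∈ pool s.1
  have hall_full :
      ∀ A ⊆ ({s | s.1 ∈ F} : Finset _), #A ≤ #{j | ∃ s ∈ A, r s j} := fun A hA =>
    calc #A ≤ #((A.image Sigma.fst).sigma fun i => (univ : Finset (Fin (c i)))) :=
          card_le_card fun s hs => mem_sigma.2 ⟨mem_image_of_mem _ hs, mem_univ _⟩
      _ ≤ #((A.image Sigma.fst).biUnion pool) :=
          (hcopies _).trans_le (hF _ fun i hi => by
            obtain ⟨s, hs, rfl⟩ := mem_image.1 hi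
            simpa using hA hs)
      _ = #{j | ∃ s ∈ A, r s j} := by congr 1; ext j; simp [r]
  have hall_cover : ∀ J ⊆ P, #J ≤ #{s | ∃ j ∈ J, r s j} := fun J hJ =>
    calc #J ≤ ∑ i with ¬Disjoint (pool i) J, c i := hP J hJ
      _ = #(({i | ¬Disjoint (pool i) J} : Finset ι).sigma fun i => (univ : Finset (Fin (c i)))) :=
          (hcopies _).symm
      _ ≤ #{s | ∃ j ∈ J, r s j} := card_le_card fun s hs => by
          obtain ⟨j, hj, hjJ⟩ := not_disjoint_iff.1 (mem_filter.1 (mem_sigma.1 hs).1).2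
          exact mem_filter.2 ⟨mem_univ _, j, hjJ, hj⟩
  obtain ⟨m, hm_pool, hm_inj, hm_full, hm_cover⟩ :=
    exists_matching_covering_of_hall hall_full hall_cover
  refine ⟨copyBundle m, fun i j hj => ?_, fun i => card_copyBundle_le, fun i hi => ?_,
    fun i k hik => ?_, fun j hj => ?_⟩
  · obtain ⟨k, hk⟩ := mem_copyBundle.1 hj
    exact hm_pool _ _ hk
  · exact card_copyBundle_eq hm_inj fun k => hm_full _ (by simpa using hi)
  · refine disjoint_left.2 fun j hi hk => hik ?_
    obtain ⟨a, ha⟩ := mem_copyBundle.1 hi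
    obtain ⟨b, hb⟩ := mem_copyBundle.1 hk
    exact congrArg Sigma.fst (hm_inj _ _ _ ha hb)
  · obtain ⟨s, hs⟩ := hm_cover j hj
    exact ⟨s.1, mem_copyBundle.2 ⟨s.2, hs⟩⟩

section Prices

variable {G : Type*} [Fintype G]

-- `none` is the option of buying nothing.
noncomputable def unitSurplus (w p : G → ℝ) : ℝ :=
  (univ : Finset (Option G)).sup' univ_nonempty fun o => o.elim 0 fun j => w j - p j

noncomputable def demandSet (w p : G → ℝ) : Finset G := {j | w j - p j = unitSurplus w p}

def shiftOn [DecidableEq G] (J : Finset G) (ε : ℝ) (p : G → ℝ) : G → ℝ :=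
  fun j => p j + if j ∈ J then ε else 0

theorem sub_le_unitSurplus (w p : G → ℝ) (j : G) : w j - p j ≤ unitSurplus w p :=
  le_sup' (fun o : Option G => o.elim 0 fun j => w j - p j) (mem_univ (some j))

theorem unitSurplus_nonneg (w p : G → ℝ) : 0 ≤ unitSurplus w p :=
  le_sup' (fun o : Option G => o.elim 0 fun j => w j - p j) (mem_univ none)

theorem continuous_unitSurplus (w : G → ℝ) : Continuous (unitSurplus w) :=
  Continuous.finset_sup'_apply _ fun o _ => by
    cases o; exacts [continuous_const, continuous_const.sub (continuous_apply _)]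

theorem eventually_add_le_unitSurplus (w p : G → ℝ) :
    ∀ᶠ ε in 𝓝 0, ∀ j ∉ demandSet w p, w j - p j + ε ≤ unitSurplus w p := by
  refine eventually_all.2 fun j => ?_
  by_cases hj : j ∈ demandSet w p
  · exact .of_forall fun _ h => absurd hj h
  · have hlt : 0 < unitSurplus w p - (w j - p j) :=
      sub_pos.2 ((sub_le_unitSurplus w p j).lt_of_ne fun h => hj (by simpa [demandSet] using h))
    filter_upwards [eventually_lt_nhds hlt] with ε hε _
    linarith

variable {w p : G → ℝ} {J : Finset G} {ε : ℝ}

theorem unitSurplus_le {x : ℝ} (h0 : 0 ≤ x) (h : ∀ j, w j - p j ≤ x) :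
    unitSurplus w p ≤ x :=
  sup'_le _ _ fun o _ => by cases o; exacts [h0, h _]

variable [DecidableEq G]

theorem sum_shiftOn : ∑ j, shiftOn J ε p j = ∑ j, p j + ε * #J := by
  simp [shiftOn, sum_add_distrib, sum_ite_mem, mul_comm]

theorem unitSurplus_shiftOn_le (hε : 0 ≤ ε) :
    unitSurplus w (shiftOn J ε p) ≤ unitSurplus w p :=
  unitSurplus_le (unitSurplus_nonneg w p) fun j => by
    have := sub_le_unitSurplus w p j
    unfold shiftOn; split_ifs <;> linarith

theorem unitSurplus_shiftOn_neg_le (hε : 0 ≤ ε) :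
    unitSurplus w (shiftOn J (-ε) p) ≤ unitSurplus w p + ε :=
  unitSurplus_le (by linarith [unitSurplus_nonneg w p]) fun j => by
    have := sub_le_unitSurplus w p j
    unfold shiftOn; split_ifs <;> linarith

theorem eventually_unitSurplus_shiftOn_le_sub (hpos : 0 < unitSurplus w p)
    (hJ : demandSet w p ⊆ J) :
    ∀ᶠ ε in 𝓝 0, unitSurplus w (shiftOn J ε p) ≤ unitSurplus w p - ε := by
  filter_upwards [eventually_lt_nhds hpos, eventually_add_le_unitSurplus w p]
    with ε hε hgap
  refine unitSurplus_le (by linarith) fun j => ?_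
  have := sub_le_unitSurplus w p j
  unfold shiftOn
  split_ifs with hj
  · linarith
  · linarith [hgap j fun h => hj (hJ h)]

theorem eventually_unitSurplus_shiftOn_neg_le (hJ : Disjoint (demandSet w p) J) :
    ∀ᶠ ε in 𝓝 0, unitSurplus w (shiftOn J (-ε) p) ≤ unitSurplus w p := by
  filter_upwards [eventually_add_le_unitSurplus w p] with ε hgap
  refine unitSurplus_le (unitSurplus_nonneg w p) fun j => ?_
  have := sub_le_unitSurplus w p j
  unfold shiftOn
  split_ifs with hj
  · linarith [hgap j (disjoint_right.1 hJ hj)]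
  · linarith

end Prices

section Market

variable {ι G : Type*} [Fintype ι] [Fintype G] {w : ι → G → ℝ} {c : ι → ℕ} 
  {p q : G → ℝ}

noncomputable def surplusPotential (w : ι → G → ℝ) (c : ι → ℕ) (p : G → ℝ) : ℝ :=
  ∑ i, c i * unitSurplus (w i) p + ∑ j, p j

theorem continuous_surplusPotential (w : ι → G → ℝ) (c : ι → ℕ) :
    Continuous (surplusPotential w c) :=
  (continuous_finsetSum _ fun i _ => continuous_const.mul (continuous_unitSurplus (w i))).add
    (continuous_finsetSum _ fun j _ => continuous_apply j)

theorem sum_mul_add_nonneg_of_isMinOn {K : Set (G → ℝ)}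
    (hmin : IsMinOn (surplusPotential w c) K p)
    (hq : q ∈ K) {ε : ℝ} (hε : 0 < ε) (δ : ι → ℝ) (t : ℝ)
    (hsurplus : ∀ i, unitSurplus (w i) q ≤ unitSurplus (w i) p + ε * δ i)
    (hsum : ∑ j, q j = ∑ j, p j + ε * t) :
    0 ≤ ∑ i, c i * δ i + t := by
  have hle : ∑ i, c i * unitSurplus (w i) q ≤
      ∑ i, c i * unitSurplus (w i) p + ε * ∑ i, c i * δ i := by
    calc ∑ i, c i * unitSurplus (w i) q ≤ ∑ i, c i * (unitSurplus (w i) p + ε * δ i) :=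
          sum_le_sum fun i _ => mul_le_mul_of_nonneg_left (hsurplus i) (Nat.cast_nonneg _)
      _ = _ := by rw [mul_sum, ← sum_add_distrib]; exact sum_congr rfl fun i _ => by ring
  have hpq : surplusPotential w c p ≤ surplusPotential w c q := hmin hq
  unfold surplusPotential at hpq
  refine (mul_nonneg_iff_of_pos_left hε).1 ?_
  rw [mul_add]
  linarith

variable [DecidableEq G] {M : ℝ}

theorem sum_capacity_le_card_biUnion_demandSet_of_isMinOn (hwM : ∀ i j, w i j ≤ M)
    (hp : p ∈ Set.Icc 0 fun _ => M)
    (hmin : IsMinOn (surplusPotential w c) (Set.Icc 0 fun _ => M) p)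
    (I : Finset ι) (hI : ∀ i ∈ I, 0 < unitSurplus (w i) p) :
    ∑ i ∈ I, c i ≤ #(I.biUnion fun i => demandSet (w i) p) := by
  classical
  obtain ⟨hp0, hpM⟩ : (∀ j, 0 ≤ p j) ∧ ∀ j, p j ≤ M := hp
  set J := I.biUnion fun i => demandSet (w i) p
  have hpJ : ∀ j ∈ J, p j < M := fun j hj => by
    obtain ⟨i, hi, hj⟩ := mem_biUnion.1 hj
    have : w i j - p j = unitSurplus (w i) p := (mem_filter.1 hj).2
    linarith [hI i hi, hwM i j]
  obtain ⟨ε, hε, hεM, hεI⟩ : ∃ ε : ℝ, 0 < ε ∧ (∀ j ∈ J, ε < M - p j) ∧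
      ∀ i ∈ I, unitSurplus (w i) (shiftOn J ε p) ≤ unitSurplus (w i) p - ε := by
    have h1 : ∀ᶠ ε in 𝓝 (0:ℝ), ∀ j ∈ J, ε < M - p j :=
      (eventually_all_finset J).2 fun j hj => eventually_lt_nhds (sub_pos.2 (hpJ j hj))
    have h2 : ∀ᶠ ε in 𝓝 (0:ℝ), ∀ i ∈ I,
        unitSurplus (w i) (shiftOn J ε p) ≤ unitSurplus (w i) p - ε :=
      (eventually_all_finset I).2 fun i hi => eventually_unitSurplus_shiftOn_le_sub (hI i hi)
        (subset_biUnion_of_mem (fun i => demandSet (w i) p) hi)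
    exact (h1.and h2).exists_gt
  have hq : shiftOn J ε p ∈ Set.Icc 0 fun _ => M := by
    refine ⟨fun j => ?_, fun j => ?_⟩ <;> simp only [shiftOn, Pi.zero_apply] <;>
      split_ifs with hj
    · linarith [hp0 j]
    · linarith [hp0 j]
    · linarith [hεM j hj]
    · linarith [hpM j]
  have := sum_mul_add_nonneg_of_isMinOn hmin hq hε (fun i => if i ∈ I then -1 else 0) #J
    (fun i => by
      split_ifs with hi
      · linarith [hεI i hi]
      · linarith [unitSurplus_shiftOn_le (w := w i) (J := J) (p := p) hε.le])
    sum_shiftOn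
  simp [mul_ite, sum_ite_mem] at this
  exact_mod_cast this

theorem card_le_sum_capacity_of_isMinOn (hp : p ∈ Set.Icc 0 fun _ => M)
    (hmin : IsMinOn (surplusPotential w c) (Set.Icc 0 fun _ => M) p)
    (J : Finset G) (hJ : ∀ j ∈ J, 0 < p j) :
    #J ≤ ∑ i with ¬Disjoint (demandSet (w i) p) J, c i := by
  obtain ⟨hp0, hpM⟩ : (∀ j, 0 ≤ p j) ∧ ∀ j, p j ≤ M := hp
  obtain ⟨ε, hε, hεp, hεI⟩ : ∃ ε : ℝ, 0 < ε ∧ (∀ j ∈ J, ε < p j) ∧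
      ∀ i, Disjoint (demandSet (w i) p) J →
        unitSurplus (w i) (shiftOn J (-ε) p) ≤ unitSurplus (w i) p := by
    have h1 : ∀ᶠ ε in 𝓝 (0:ℝ), ∀ j ∈ J, ε < p j :=
      (eventually_all_finset J).2 fun j hj => eventually_lt_nhds (hJ j hj)
    have h2 : ∀ᶠ ε in 𝓝 (0:ℝ), ∀ i, Disjoint (demandSet (w i) p) J →
        unitSurplus (w i) (shiftOn J (-ε) p) ≤ unitSurplus (w i) p :=
      eventually_all.2 fun i => by
        by_cases hi : Disjoint (demandSet (w i) p) J
        · exact (eventually_unitSurplus_shiftOn_neg_le hi).mono fun _ h _ => h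
        · exact .of_forall fun _ h => absurd h hi
    exact (h1.and h2).exists_gt
  have hq : shiftOn J (-ε) p ∈ Set.Icc 0 fun _ => M := by
    refine ⟨fun j => ?_, fun j => ?_⟩ <;> simp only [shiftOn, Pi.zero_apply] <;>
      split_ifs with hj
    · linarith [hεp j hj]
    · linarith [hp0 j]
    · linarith [hpM j]
    · linarith [hpM j]
  have := sum_mul_add_nonneg_of_isMinOn hmin hq hε
    (fun i => if Disjoint (demandSet (w i) p) J then 0 else 1) (-#J)
    (fun i => by
      split_ifs with hi
      · linarith [hεI i hi]
      · linarith [unitSurplus_shiftOn_neg_le (w := w i) (J := J) (p := p) hε.le])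
    (by rw [sum_shiftOn]; ring)
  simp [mul_ite] at this
  rw [sum_filter]
  simp_rw [ite_not]
  exact_mod_cast this

end Market

section Equilibrium

variable {G : Type*} [Fintype G] [DecidableEq G] {w p : G → ℝ} {c : ℕ}

theorem capVal_sub_sum_le_mul_unitSurplus (hp : ∀ j, 0 ≤ p j) (S : Finset G) :
    capVal w c S - ∑ j ∈ S, p j ≤ c * unitSurplus w p := by
  rw [capVal, sub_le_iff_le_add]
  refine sup'_le _ _ fun T hT => ?_
  obtain ⟨hTS, hTc⟩ : T ⊆ S ∧ #T ≤ c := by simpa using hT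
  calc ∑ j ∈ T, w j = ∑ j ∈ T, (w j - p j) + ∑ j ∈ T, p j := by
        rw [← sum_add_distrib]; simp
    _ ≤ #T • unitSurplus w p + ∑ j ∈ S, p j :=
        add_le_add (sum_le_card_nsmul _ _ _ fun j _ => sub_le_unitSurplus w p j)
          (sum_le_sum_of_subset_of_nonneg hTS fun j _ _ => hp j)
    _ ≤ c * unitSurplus w p + ∑ j ∈ S, p j := by
        rw [nsmul_eq_mul]
        gcongr
        exact unitSurplus_nonneg w p

theorem mul_unitSurplus_le_capVal_sub_sum {X : Finset G} (hX : X ⊆ demandSet w p)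
    (hXc : #X ≤ c) (hfull : 0 < unitSurplus w p → #X = c) :
    c * unitSurplus w p ≤ capVal w c X - ∑ j ∈ X, p j := by
  have hsum : ∑ j ∈ X, (w j - p j) = #X * unitSurplus w p := by
    rw [sum_congr rfl fun j hj => (mem_filter.1 (hX hj)).2, sum_const, nsmul_eq_mul]
  have hcap : ∑ j ∈ X, w j ≤ capVal w c X :=
    le_sup' (fun T => ∑ j ∈ T, w j) (by simpa using hXc)
  have hcard : (c : ℝ) * unitSurplus w p = #X * unitSurplus w p := by
    rcases (unitSurplus_nonneg w p).lt_or_eq with h | h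
    · rw [hfull h]
    · rw [← h, mul_zero, mul_zero]
  rw [sum_sub_distrib] at hsum
  linarith

end Equilibrium

theorem capacitated_walrasian_exists_general {G : Type*} [Fintype G] [DecidableEq G]
    (n : ℕ) (w : Fin n → G → ℝ) (c : Fin n → ℕ) :
    ∃ (p : G → ℝ) (a : Fin n → Finset G),
      (∀ j, 0 ≤ p j) ∧
      (∀ i k, i ≠ k → Disjoint (a i) (a k)) ∧
      (∀ i, ∀ S : Finset G,
        capVal (w i) (c i) S - ∑ j ∈ S, p j ≤
          capVal (w i) (c i) (a i) - ∑ j ∈ a i, p j) ∧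
      (∀ j, (∀ i, j ∉ a i) → p j = 0) := by
  obtain ⟨M, hM, hwM⟩ : ∃ M : ℝ, 0 ≤ M ∧ ∀ i j, w i j ≤ M := by
    obtain ⟨B, hB⟩ := (Set.finite_range (Function.uncurry w)).bddAbove
    exact ⟨max B 0, le_max_right _ _, fun i j => (hB ⟨(i, j), rfl⟩).trans (le_max_left _ _)⟩
  obtain ⟨p, hp, hmin⟩ := isCompact_Icc.exists_isMinOn (Set.nonempty_Icc.2 fun _ => hM)
    (continuous_surplusPotential w c).continuousOn
  obtain ⟨a, ha_demand, ha_card, ha_full, ha_disj, ha_cover⟩ :=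
    exists_capacitated_matching c (fun i => demandSet (w i) p) {i | 0 < unitSurplus (w i) p}
      {j | 0 < p j}
      (fun I hI => sum_capacity_le_card_biUnion_demandSet_of_isMinOn hwM hp hmin I fun i hi => by
        simpa using hI hi)
      (fun J hJ => card_le_sum_capacity_of_isMinOn hp hmin J fun j hj => by simpa using hJ hj)
  refine ⟨p, a, hp.1, ha_disj, fun i S => ?_, fun j hj => ?_⟩
  · exact (capVal_sub_sum_le_mul_unitSurplus hp.1 S).trans
      (mul_unitSurplus_le_capVal_sub_sum (ha_demand i) (ha_card i) fun h =>
        ha_full i (by simpa using h))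
  · by_contra hpj
    obtain ⟨i, hi⟩ := ha_cover j (by simpa using (hp.1 j).lt_of_ne (Ne.symm hpj))
    exact hj i hi

/-- Every allocation problem with capacitated valuations admits a Walrasian
equilibrium: nonnegative item prices and disjoint bundles such that each agent's
bundle maximizes her quasi-linear utility, and unallocated goods have price 0. -/
theorem capacitated_walrasian_exists {G : Type*} [Fintype G] [DecidableEq G]
    (n : ℕ) (w : Fin n → G → ℝ) (hw : ∀ i j, 0 ≤ w i j) (c : Fin n → ℕ) :
    ∃ (p : G → ℝ) (a : Fin n → Finset G),
      (∀ j, 0 ≤ p j) ∧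
      (∀ i k, i ≠ k → Disjoint (a i) (a k)) ∧
      (∀ i, ∀ S : Finset G,
        capVal (w i) (c i) S - ∑ j ∈ S, p j ≤
          capVal (w i) (c i) (a i) - ∑ j ∈ a i, p j) ∧
      (∀ j, (∀ i, j ∉ a i) → p j = 0) :=
  capacitated_walrasian_exists_general n w c
end

section
/- For two agents, each with capacity 2, and three goods, there is no incentive compatible mechanism producing Walrasian prices. Precisely: there do not exist functions A, assigning to every profile of nonnegative per-item values w : Fin 2 → Fin 3 → ℝ a pair of disjoint bundles A_1(w), A_2(w) ⊆ Fin 3, and P, assigning to every profile item prices P(w) : Fin 3 → ℝ, such that (i) for every profile w and each agent i, the bundle A_i(w) maximizes v_i(S) − Σ_{j∈S} P(w) j over all bundles S, where v_i is the capacitated valuation induced by w i with capacity 2; (ii) every good not in A_1(w) ∪ A_2(w) has price 0; and (iii) with payments p_i(w) = Σ_{j∈A_i(w)} P(w) j, the mechanism is incentive compatible: for all w, each agent i, and every misreport w_i' : Fin 3 → ℝ nonnegative, writing w' for the profile with w i replaced by w_i', one has v_i(A_i(w)) − p_i(w) ≥ v_i(A_i(w')) − p_i(w'). -/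
lemma capVal_const (κ : ℝ) (hκ : 0 ≤ κ) (S : Finset (Fin 3)) :
    capVal (fun _ => κ) 2 S = κ * (min S.card 2 : ℕ) := by
  unfold capVal
  apply le_antisymm
  · apply Finset.sup'_le
    intro T hT
    simp only [Finset.mem_filter, Finset.mem_powerset] at hT
    rw [Finset.sum_const, nsmul_eq_mul]
    have h1 : (T.card : ℝ) ≤ (min S.card 2 : ℕ) := by
      exact_mod_cast le_min (Finset.card_le_card hT.1) hT.2
    nlinarith [mul_le_mul_of_nonneg_right h1 hκ]
  · obtain ⟨T, hTS, hTc⟩ := Finset.exists_subset_card_eq (min_le_left S.card 2)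
    have hmem : T ∈ (S.powerset.filter fun T => T.card ≤ 2) := by
      simp only [Finset.mem_filter, Finset.mem_powerset]
      exact ⟨hTS, hTc ▸ min_le_right _ _⟩
    refine le_trans (le_of_eq ?_) (Finset.le_sup' (fun T => ∑ j ∈ T, (fun _ => κ) j) hmem)
    rw [Finset.sum_const, nsmul_eq_mul, hTc]; ring

/-- For two agents, each with capacity 2, and three goods, there is no incentive
compatible mechanism producing Walrasian prices. -/
theorem no_IC_walrasian_two_agents_capacity_two :
    ¬ ∃ (A : (Fin 2 → Fin 3 → ℝ) → Fin 2 → Finset (Fin 3))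
        (P : (Fin 2 → Fin 3 → ℝ) → Fin 3 → ℝ),
      ∀ w : Fin 2 → Fin 3 → ℝ, (∀ i j, 0 ≤ w i j) →
        -- disjoint bundles
        (Disjoint (A w 0) (A w 1)) ∧
        -- (i) each agent's bundle maximizes her utility at prices P w
        (∀ i, ∀ S : Finset (Fin 3),
          capVal (w i) 2 S - ∑ j ∈ S, P w j ≤
            capVal (w i) 2 (A w i) - ∑ j ∈ A w i, P w j) ∧
        -- (ii) unallocated goods have price 0
        (∀ j, j ∉ A w 0 ∪ A w 1 → P w j = 0) ∧
        -- (iii) incentive compatibility with payments ∑_{j ∈ A_i(w)} P(w) j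
        (∀ i, ∀ w' : Fin 3 → ℝ, (∀ j, 0 ≤ w' j) →
          capVal (w i) 2 (A (Function.update w i w') i) -
              ∑ j ∈ A (Function.update w i w') i, P (Function.update w i w') j ≤
            capVal (w i) 2 (A w i) - ∑ j ∈ A w i, P w j) := by
  rintro ⟨A, P, h⟩
  have hw : ∀ i j, (0:ℝ) ≤ (fun (_ : Fin 2) (_ : Fin 3) => (1:ℝ)) i j := fun _ _ => zero_le_one
  obtain ⟨hdisj, hmax, hfree, hIC⟩ := h (fun _ _ => 1) hw
  have key := hIC 0 (fun _ => (1/4:ℝ)) (fun _ => by norm_num)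
  set W : Fin 2 → Fin 3 → ℝ := Function.update (fun _ _ => (1:ℝ)) 0 (fun _ => (1/4:ℝ)) with hW
  have hWnn : ∀ i j, 0 ≤ W i j := by
    intro i j
    by_cases hi : i = 0
    · subst hi; rw [hW, Function.update_self]; norm_num
    · rw [hW, Function.update_of_ne hi]; norm_num
  obtain ⟨hdisj', hmax', hfree', -⟩ := h W hWnn
  have hW0 : W 0 = fun _ => (1/4:ℝ) := by rw [hW]; exact Function.update_self _ _ _
  have hW1 : W 1 = fun _ => (1:ℝ) := by rw [hW]; exact Function.update_of_ne (by decide) _ _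
  -- Step A : A W 0 is nonempty
  have hne : (A W 0).Nonempty := by
    by_contra hcne
    rw [Finset.not_nonempty_iff_eq_empty] at hcne
    have hp4 : ∀ j : Fin 3, (1/4:ℝ) ≤ P W j := by
      intro j
      have h2 := hmax' 0 {j}
      rw [hW0, hcne] at h2
      rw [capVal_const _ (by norm_num), capVal_const _ (by norm_num)] at h2
      simp at h2
      linarith
    by_cases hA1 : A W 1 = Finset.univ
    · have h3 := hmax' 1 (Finset.univ.erase 0)
      rw [hW1, hA1] at h3
      rw [capVal_const _ (by norm_num), capVal_const _ (by norm_num)] at h3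
      rw [Finset.sum_erase_eq_sub (Finset.mem_univ (0:Fin 3))] at h3
      have hc1 : (Finset.univ.erase (0:Fin 3)).card = 2 := by decide
      have hc2 : (Finset.univ : Finset (Fin 3)).card = 3 := by decide
      rw [hc1, hc2] at h3
      norm_num at h3
      linarith [hp4 0]
    · obtain ⟨j, hj⟩ : ∃ j, j ∉ A W 1 := by
        by_contra hcon; push_neg at hcon
        exact hA1 (Finset.eq_univ_iff_forall.mpr hcon)
      have hz := hfree' j (by simp [hcne, hj])
      linarith [hp4 j]
  -- Step B : payment bound at the misreport profile
  have hB := hmax' 0 ∅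
  rw [hW0, capVal_const _ (by norm_num), capVal_const _ (by norm_num)] at hB
  simp only [Finset.card_empty, Finset.sum_empty] at hB
  have hm1 : (1:ℝ) ≤ ((min (A W 0).card 2 : ℕ) : ℝ) := by
    exact_mod_cast le_min (Finset.card_pos.mpr hne) (by norm_num)
  -- Step C : truthful utility is at most 0
  have hC : ((min (A (fun _ _ => (1:ℝ)) 0).card 2 : ℕ) : ℝ) ≤
      ∑ j ∈ A (fun _ _ => (1:ℝ)) 0, P (fun _ _ => (1:ℝ)) j := by
    by_cases hc : (A (fun _ _ => (1:ℝ)) 1).card ≤ 1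
    · have key1 : ∀ j ∈ A (fun _ _ => (1:ℝ)) 0, (1:ℝ) ≤ P (fun _ _ => (1:ℝ)) j := by
        intro j hj
        have hjn : j ∉ A (fun _ _ => (1:ℝ)) 1 := Finset.disjoint_left.mp hdisj hj
        have h5 := hmax 1 (insert j (A (fun _ _ => (1:ℝ)) 1))
        simp only [capVal_const 1 zero_le_one] at h5
        rw [Finset.sum_insert hjn, Finset.card_insert_of_notMem hjn] at h5
        have e1 : min ((A (fun _ _ => (1:ℝ)) 1).card + 1) 2
            = (A (fun _ _ => (1:ℝ)) 1).card + 1 := by omega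
        have e2 : min (A (fun _ _ => (1:ℝ)) 1).card 2
            = (A (fun _ _ => (1:ℝ)) 1).card := by omega
        rw [e1, e2] at h5
        push_cast at h5
        linarith
      have hs : ∑ j ∈ A (fun _ _ => (1:ℝ)) 0, (1:ℝ) ≤
          ∑ j ∈ A (fun _ _ => (1:ℝ)) 0, P (fun _ _ => (1:ℝ)) j :=
        Finset.sum_le_sum key1
      rw [Finset.sum_const, nsmul_eq_mul, mul_one] at hs
      have hmin : ((min (A (fun _ _ => (1:ℝ)) 0).card 2 : ℕ) : ℝ) ≤
          ((A (fun _ _ => (1:ℝ)) 0).card : ℝ) := by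
        exact_mod_cast min_le_left _ _
      linarith
    · push_neg at hc
      have hcard3 : (A (fun _ _ => (1:ℝ)) 0 ∪ A (fun _ _ => (1:ℝ)) 1).card ≤ 3 :=
        le_trans (Finset.card_le_univ _) (by simp)
      have hdu := Finset.card_union_of_disjoint hdisj
      have hA0c : (A (fun _ _ => (1:ℝ)) 0).card ≤ 1 := by omega
      rcases Finset.eq_empty_or_nonempty (A (fun _ _ => (1:ℝ)) 0) with h0 | h0
      · rw [h0]; simp
      · obtain ⟨a, ha⟩ := Finset.card_eq_one.mp
          (le_antisymm hA0c (Finset.card_pos.mpr h0))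
        obtain ⟨b, hb⟩ := Finset.card_pos.mp
          (by omega : 0 < (A (fun _ _ => (1:ℝ)) 1).card)
        have hab : a ∉ A (fun _ _ => (1:ℝ)) 1 :=
          Finset.disjoint_left.mp hdisj (ha ▸ Finset.mem_singleton_self a)
        have hba : b ∉ ({a} : Finset (Fin 3)) := by
          simp only [Finset.mem_singleton]; rintro rfl; exact hab hb
        have h6 := hmax 0 (insert b {a})
        rw [ha] at h6
        simp only [capVal_const 1 zero_le_one] at h6
        rw [Finset.sum_insert hba, Finset.card_insert_of_notMem hba,
          Finset.sum_singleton, Finset.card_singleton] at h6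
        norm_num at h6
        have hanotin : a ∉ (A (fun _ _ => (1:ℝ)) 1).erase b :=
          fun hmem => hab (Finset.mem_of_mem_erase hmem)
        have h7 := hmax 1 (insert a ((A (fun _ _ => (1:ℝ)) 1).erase b))
        simp only [capVal_const 1 zero_le_one] at h7
        rw [Finset.sum_insert hanotin, Finset.sum_erase_eq_sub hb,
          Finset.card_insert_of_notMem hanotin, Finset.card_erase_of_mem hb] at h7
        have e3 : min ((A (fun _ _ => (1:ℝ)) 1).card - 1 + 1) 2 = 2 := by omega
        have e4 : min (A (fun _ _ => (1:ℝ)) 1).card 2 = 2 := by omega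
        rw [e3, e4] at h7
        push_cast at h7
        rw [ha, Finset.sum_singleton, Finset.card_singleton]
        norm_num
        linarith
  -- Step D : combine with incentive compatibility
  simp only [capVal_const 1 zero_le_one] at key
  linarith
end

section
/- In the capacitated b-matching setting, let agents 1 and 2 satisfy c 1 ≥ c 2, let M be a welfare-maximizing allocation and M^{-1} a welfare-maximizing allocation among those whose row 1 is zero. Then there exists an allocation D whose row 2 is identically zero such that v(D) ≥ v(M^{-1}) + Σ_j M 2 j · w 1 j − Σ_j M 2 j · w 2 j. -/
/-- An allocation in the capacitated `b`-matching setting: agent `i` gets at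
most `c i` units in total and at most `q j` units of good `j` are allocated. -/
def IsAlloc {n m : ℕ} (c : Fin n → ℕ) (q : Fin m → ℕ)
    (a : Fin n → Fin m → ℕ) : Prop :=
  (∀ i, ∑ j, a i j ≤ c i) ∧ (∀ j, ∑ i, a i j ≤ q j)

/-- The value of an allocation: `∑_{i,j} a i j · w i j`. -/
def allocVal {n m : ℕ} (w : Fin n → Fin m → ℝ) (a : Fin n → Fin m → ℕ) : ℝ :=
  ∑ i, ∑ j, (a i j : ℝ) * w i j

/-!
Moving agent `i₂`'s bundle in `M` onto agent `i₁` gives a matrix `A` of value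
`v(M) + ∑ j, M i₂ j * (w i₁ j - w i₂ j)` that gives nothing to `i₂` and respects all capacities,
except that agent `i₁` may hold up to `c i₁ + c i₂` units. It then suffices to split `A + M₁` into
two allocations `D + E` with `D` avoiding `i₂`, since `v(E) ≤ v(M)`.

The split is found by local search. Start from a split that respects the agents' capacities and
lower the total excess of the column sums over `q` by trading units between the two parts along
an alternating route of goods. If no route leaves an over-full good, the goods reachable from it
form a closed set, and counting the units of `A` and `M₁` in those columns row by row gives a
contradiction; this count is where `c i₂ ≤ c i₁` enters.
-/

namespace BMatching

open Finset

variable {n m : ℕ}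

def rowSum (X : Fin n → Fin m → ℕ) (i : Fin n) : ℕ := ∑ j, X i j

def colSum (X : Fin n → Fin m → ℕ) (j : Fin m) : ℕ := ∑ i, X i j

lemma rowSum_add (X Y : Fin n → Fin m → ℕ) (i : Fin n) :
    rowSum (X + Y) i = rowSum X i + rowSum Y i :=
  sum_add_distrib

lemma colSum_add (X Y : Fin n → Fin m → ℕ) (j : Fin m) :
    colSum (X + Y) j = colSum X j + colSum Y j :=
  sum_add_distrib

lemma rowSum_single (i : Fin n) (r : Fin m → ℕ) (a : Fin n) :
    rowSum (Pi.single i r) a = if a = i then ∑ j, r j else 0 := by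
  by_cases ha : a = i
  · subst ha; simp [rowSum]
  · simp [rowSum, ha]

lemma colSum_single (i : Fin n) (r : Fin m → ℕ) (j : Fin m) :
    colSum (Pi.single i r) j = r j := by
  rw [colSum, sum_eq_single i (fun a _ ha => by simp [ha]) (by simp)]
  simp

def unit (i : Fin n) (j : Fin m) : Fin n → Fin m → ℕ := Pi.single i (Pi.single j 1)

@[simp] lemma unit_apply (i a : Fin n) (j b : Fin m) :
    unit i j a b = if a = i ∧ b = j then 1 else 0 := by
  by_cases ha : a = i <;> by_cases hb : b = j <;> simp [unit, ha, hb]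

@[simp] lemma rowSum_unit (i a : Fin n) (j : Fin m) :
    rowSum (unit i j) a = if a = i then 1 else 0 := by
  by_cases ha : a = i <;> simp [unit, rowSum_single, ha]

@[simp] lemma colSum_unit (i : Fin n) (j b : Fin m) :
    colSum (unit i j) b = if b = j then 1 else 0 := by
  simp [unit, colSum_single, Pi.single_apply]

lemma exists_eq_add_unit {X : Fin n → Fin m → ℕ} {i : Fin n} {j : Fin m} (h : 0 < X i j) :
    ∃ X', X = X' + unit i j := by
  refine ⟨X - unit i j, funext fun a => funext fun b => ?_⟩
  simp only [Pi.add_apply, Pi.sub_apply, unit_apply]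
  split_ifs with hab
  · obtain ⟨rfl, rfl⟩ := hab; omega
  · simp

lemma rowSum_add_unit_eq (X : Fin n → Fin m → ℕ) (i a : Fin n) (j j' : Fin m) :
    rowSum (X + unit i j) a = rowSum (X + unit i j') a := by
  simp [rowSum_add]

lemma add_unit_apply_of_ne (X : Fin n → Fin m → ℕ) {i a : Fin n} (j : Fin m) (h : a ≠ i) :
    (X + unit i j) a = X a := by
  funext b; simp [h]

lemma add_unit_apply_le (X : Fin n → Fin m → ℕ) {i a : Fin n} {j b : Fin m} (j' : Fin m)
    (h : ¬(a = i ∧ b = j)) : (X + unit i j) a b ≤ (X + unit i j') a b := by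
  simp only [Pi.add_apply, unit_apply, if_neg h]
  omega

section Exchange

variable (c : Fin n → ℕ) (q : Fin m → ℕ) (i₂ : Fin n)

/-- Trading, inside the bundle of an agent other than `i₂`, a unit of good `j` in `X` against a
unit of good `j'` in `Y` moves one unit of `X`-load from `j` to `j'` and keeps all row sums. -/
def Linked (X Y : Fin n → Fin m → ℕ) (j j' : Fin m) : Prop :=
  ∃ i, i ≠ i₂ ∧ 0 < X i j ∧ 0 < Y i j'

/-- The two ways to relieve good `j` in `X`: hand a unit to `Y` in a row where `Y` has spare
capacity, or trade it into a good that `X` uses below its quantity. -/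
def IsExit (X Y : Fin n → Fin m → ℕ) (j : Fin m) : Prop :=
  (∃ i, i ≠ i₂ ∧ 0 < X i j ∧ rowSum Y i < c i) ∨
    ∃ j', Linked i₂ X Y j j' ∧ colSum X j' < q j'

def ReachesExit (X Y : Fin n → Fin m → ℕ) : ℕ → Fin m → Prop
  | 0, j => IsExit c q i₂ X Y j
  | k + 1, j => ReachesExit X Y k j ∨ ∃ j', Linked i₂ X Y j j' ∧ ReachesExit X Y k j'

def overload (X Y : Fin n → Fin m → ℕ) : ℕ :=
  ∑ j, (colSum X j - q j + (colSum Y j - q j))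

variable {c q i₂}

lemma ReachesExit.mono {X Y : Fin n → Fin m → ℕ} {k k' : ℕ} {j : Fin m}
    (h : ReachesExit c q i₂ X Y k j) (hk : k ≤ k') : ReachesExit c q i₂ X Y k' j := by
  induction k', hk using Nat.le_induction with
  | base => exact h
  | succ k' _ ih => exact Or.inl ih

lemma overload_comm (X Y : Fin n → Fin m → ℕ) : overload q X Y = overload q Y X :=
  sum_congr rfl fun _ _ => Nat.add_comm _ _

lemma overload_add_one_le {X Y X' Y' : Fin n → Fin m → ℕ} {j₀ : Fin m} (e : Fin m → ℕ)
    (h : ∀ b, colSum X' b - q b + (colSum Y' b - q b) + (if b = j₀ then 1 else 0) ≤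
      colSum X b - q b + (colSum Y b - q b) + e b) :
    overload q X' Y' + 1 ≤ overload q X Y + ∑ b, e b := by
  simpa [overload, sum_add_distrib] using sum_le_sum fun b (_ : b ∈ univ) => h b

end Exchange

section Improve

variable {c : Fin n → ℕ} {q : Fin m → ℕ} {i₂ : Fin n}

lemma overload_swap_add_one_le {X Y : Fin n → Fin m → ℕ} {i : Fin n} {j₀ j₁ : Fin m}
    (hj : j₀ ≠ j₁) (hover : q j₀ < colSum (X + unit i j₀) j₀)
    (hcol : colSum (X + unit i j₀) j₀ + colSum (Y + unit i j₁) j₀ ≤ q j₀ + q j₀) :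
    overload q (X + unit i j₁) (Y + unit i j₀) + 1 ≤
      overload q (X + unit i j₀) (Y + unit i j₁) +
        if q j₁ ≤ colSum (X + unit i j₀) j₁ then 1 else 0 := by
  have := overload_add_one_le (q := q) (j₀ := j₀) (X := X + unit i j₀) (Y := Y + unit i j₁)
    (X' := X + unit i j₁) (Y' := Y + unit i j₀)
    (fun b => if b = j₁ ∧ q j₁ ≤ colSum (X + unit i j₀) j₁ then 1 else 0) fun b => by
      simp only [colSum_add, colSum_unit] at hover hcol ⊢
      by_cases hb₀ : b = j₀
      · subst hb₀
        simp only [↓reduceIte, if_neg hj] at hover hcol ⊢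
        omega
      · by_cases hb₁ : b = j₁
        · subst hb₁
          simp only [↓reduceIte, if_neg hb₀, true_and]
          split_ifs <;> omega
        · simp [hb₀, hb₁]
  simpa [ite_and] using this

lemma overload_transfer_add_one_le {X Y : Fin n → Fin m → ℕ} {i : Fin n} {j₀ : Fin m}
    (hover : q j₀ < colSum (X + unit i j₀) j₀)
    (hcol : colSum (X + unit i j₀) j₀ + colSum Y j₀ ≤ q j₀ + q j₀) :
    overload q X (Y + unit i j₀) + 1 ≤ overload q (X + unit i j₀) Y := by
  have := overload_add_one_le (q := q) (j₀ := j₀) (X := X + unit i j₀) (Y := Y)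
    (X' := X) (Y' := Y + unit i j₀) 0 fun b => by
      simp only [colSum_add, colSum_unit] at hover hcol ⊢
      by_cases hb : b = j₀
      · subst hb
        simp only [↓reduceIte] at hover hcol ⊢
        omega
      · simp [hb]
  simpa using this

lemma exists_overload_lt_of_isExit {X Y : Fin n → Fin m → ℕ} {j₀ : Fin m}
    (hXrow : ∀ i, rowSum X i ≤ c i) (hYrow : ∀ i, rowSum Y i ≤ c i)
    (hcol : ∀ j, colSum X j + colSum Y j ≤ q j + q j) (hover : q j₀ < colSum X j₀)
    (hexit : IsExit c q i₂ X Y j₀) :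
    ∃ X' Y', X' + Y' = X + Y ∧ X' i₂ = X i₂ ∧ Y' i₂ = Y i₂ ∧
      (∀ i, rowSum X' i ≤ c i) ∧ (∀ i, rowSum Y' i ≤ c i) ∧
      overload q X' Y' < overload q X Y := by
  rcases hexit with ⟨i, hi, hX, hY⟩ | ⟨s, ⟨i, hi, hX, hY⟩, hs⟩
  · obtain ⟨X, rfl⟩ := exists_eq_add_unit hX
    refine ⟨X, Y + unit i j₀, by abel, (add_unit_apply_of_ne X j₀ hi.symm).symm,
      add_unit_apply_of_ne Y j₀ hi.symm, fun a => ?_, fun a => ?_,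
      overload_transfer_add_one_le hover (hcol j₀)⟩
    · have := hXrow a
      simp only [rowSum_add, rowSum_unit] at this
      omega
    · have := hYrow a
      simp only [rowSum_add, rowSum_unit]
      split_ifs with ha
      · exact ha ▸ hY
      · omega
  · have hs₀ : s ≠ j₀ := by rintro rfl; omega
    obtain ⟨X, rfl⟩ := exists_eq_add_unit hX
    obtain ⟨Y, rfl⟩ := exists_eq_add_unit hY
    have hle := overload_swap_add_one_le hs₀.symm hover (hcol j₀)
    rw [if_neg (not_le.2 hs)] at hle
    refine ⟨X + unit i s, Y + unit i j₀, by abel, ?_, ?_,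
      fun a => (rowSum_add_unit_eq X i a s j₀).trans_le (hXrow a),
      fun a => (rowSum_add_unit_eq Y i a j₀ s).trans_le (hYrow a), by omega⟩ <;>
    rw [add_unit_apply_of_ne _ _ hi.symm, add_unit_apply_of_ne _ _ hi.symm]

/-- Routes of length `≤ k` never visit `j₀` and never link into `j₁`, as otherwise `j₀` would be
within `k` links of an exit; so they survive the trade, which only lowers `X` at `(i, j₀)` and
`Y` at `(i, j₁)`. -/
lemma reachesExit_of_swap {X Y : Fin n → Fin m → ℕ} {i : Fin n} {j₀ j₁ : Fin m} {k : ℕ}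
    (hi : i ≠ i₂) (hj₀ : ¬ReachesExit c q i₂ (X + unit i j₀) (Y + unit i j₁) k j₀)
    (hj₁ : q j₁ ≤ colSum (X + unit i j₀) j₁) :
    ∀ r ≤ k, ∀ b, ReachesExit c q i₂ (X + unit i j₀) (Y + unit i j₁) r b →
      ReachesExit c q i₂ (X + unit i j₁) (Y + unit i j₀) r b := by
  have hne : ∀ r ≤ k, ∀ b, ReachesExit c q i₂ (X + unit i j₀) (Y + unit i j₁) r b → b ≠ j₀ :=
    fun r hr b hb hb₀ => hj₀ (hb₀ ▸ hb.mono hr)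
  intro r
  induction r with
  | zero =>
    intro _ b hb
    have hb₀ := hne 0 (Nat.zero_le k) b hb
    rcases hb with ⟨a, ha, hX, hY⟩ | ⟨s, ⟨a, ha, hX, hY⟩, hs⟩
    · refine Or.inl ⟨a, ha, ?_, ?_⟩
      · exact hX.trans_le (add_unit_apply_le X j₁ fun h => hb₀ h.2)
      · rwa [rowSum_add_unit_eq]
    · have hs₁ : s ≠ j₁ := by rintro rfl; omega
      refine Or.inr ⟨s, ⟨a, ha, ?_, ?_⟩, ?_⟩
      · exact hX.trans_le (add_unit_apply_le X j₁ fun h => hb₀ h.2)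
      · exact hY.trans_le (add_unit_apply_le Y j₀ fun h => hs₁ h.2)
      · simp only [colSum_add, colSum_unit, if_neg hs₁] at hs ⊢
        omega
  | succ r ih =>
    intro hr b hb
    rcases hb with hb | ⟨b', ⟨a, ha, hX, hY⟩, hb'⟩
    · exact Or.inl (ih (by omega) b hb)
    have hb₀ := hne (r + 1) hr b (Or.inr ⟨b', ⟨a, ha, hX, hY⟩, hb'⟩)
    have hb'₁ : b' ≠ j₁ := by
      rintro rfl
      refine hj₀ (ReachesExit.mono (k := r + 1) (Or.inr ⟨b', ⟨i, hi, ?_, ?_⟩, hb'⟩) hr) <;>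
        simp
    refine Or.inr ⟨b', ⟨a, ha, ?_, ?_⟩, ih (by omega) b' hb'⟩
    · exact hX.trans_le (add_unit_apply_le X j₁ fun h => hb₀ h.2)
    · exact hY.trans_le (add_unit_apply_le Y j₀ fun h => hb'₁ h.2)

theorem exists_overload_lt {X Y : Fin n → Fin m → ℕ} {j₀ : Fin m} {k : ℕ}
    (hXrow : ∀ i, rowSum X i ≤ c i) (hYrow : ∀ i, rowSum Y i ≤ c i)
    (hcol : ∀ j, colSum X j + colSum Y j ≤ q j + q j) (hover : q j₀ < colSum X j₀)
    (hreach : ReachesExit c q i₂ X Y k j₀) :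
    ∃ X' Y', X' + Y' = X + Y ∧ X' i₂ = X i₂ ∧ Y' i₂ = Y i₂ ∧
      (∀ i, rowSum X' i ≤ c i) ∧ (∀ i, rowSum Y' i ≤ c i) ∧
      overload q X' Y' < overload q X Y := by
  induction k generalizing X Y j₀ with
  | zero => exact exists_overload_lt_of_isExit hXrow hYrow hcol hover hreach
  | succ k ih =>
    by_cases hk : ReachesExit c q i₂ X Y k j₀
    · exact ih hXrow hYrow hcol hover hk
    obtain ⟨j₁, ⟨i, hi, hX, hY⟩, hj₁⟩ := hreach.resolve_left hk
    have hq₁ : q j₁ ≤ colSum X j₁ := by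
      by_contra h
      exact hk (ReachesExit.mono (k := 0) (Or.inr ⟨j₁, ⟨i, hi, hX, hY⟩, by omega⟩) k.zero_le)
    have hj₀₁ : j₀ ≠ j₁ := by rintro rfl; exact hk hj₁
    obtain ⟨X, rfl⟩ := exists_eq_add_unit hX
    obtain ⟨Y, rfl⟩ := exists_eq_add_unit hY
    have hsum : X + unit i j₁ + (Y + unit i j₀) = X + unit i j₀ + (Y + unit i j₁) := by abel
    obtain ⟨X', Y', hsum', hX', hY', hXrow', hYrow', hlt⟩ :=
      ih (X := X + unit i j₁) (Y := Y + unit i j₀) (j₀ := j₁)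
        (fun a => (rowSum_add_unit_eq X i a j₁ j₀).trans_le (hXrow a))
        (fun a => (rowSum_add_unit_eq Y i a j₀ j₁).trans_le (hYrow a))
        (fun b => by rw [← colSum_add, hsum, colSum_add]; exact hcol b)
        (by simp [colSum_add, hj₀₁.symm] at hq₁ ⊢; omega)
        (reachesExit_of_swap hi hk hq₁ k le_rfl j₁ hj₁)
    have hle := overload_swap_add_one_le hj₀₁ hover (hcol j₀)
    rw [if_pos hq₁] at hle
    refine ⟨X', Y', hsum'.trans hsum, ?_, ?_, hXrow', hYrow', by omega⟩
    · rw [hX', add_unit_apply_of_ne _ _ hi.symm, add_unit_apply_of_ne _ _ hi.symm]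
    · rw [hY', add_unit_apply_of_ne _ _ hi.symm, add_unit_apply_of_ne _ _ hi.symm]

end Improve

section Trap

variable (c : Fin n → ℕ) (q : Fin m → ℕ) (i₂ : Fin n)

def IsTrap (X Y : Fin n → Fin m → ℕ) (C : Finset (Fin m)) : Prop :=
  (∀ j ∈ C, q j ≤ colSum X j) ∧
    ∀ j ∈ C, ∀ i, i ≠ i₂ → 0 < X i j → c i ≤ rowSum Y i ∧ ∀ j', 0 < Y i j' → j' ∈ C

variable {c q i₂}

theorem exists_reachesExit {X Y : Fin n → Fin m → ℕ} {j₀ : Fin m}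
    (hover : q j₀ < colSum X j₀) (htrap : ∀ C, j₀ ∈ C → ¬IsTrap c q i₂ X Y C) :
    ∃ k, ReachesExit c q i₂ X Y k j₀ := by
  classical
  by_contra hno
  have hfar : ∀ j, Relation.ReflTransGen (Linked i₂ X Y) j₀ j →
      ∀ k, ¬ReachesExit c q i₂ X Y k j := by
    intro j hj
    induction hj with
    | refl => exact not_exists.1 hno
    | tail _ hlink ih => exact fun k hk => ih (k + 1) (Or.inr ⟨_, hlink, hk⟩)
  refine htrap (univ.filter (Relation.ReflTransGen (Linked i₂ X Y) j₀))
    (mem_filter.2 ⟨mem_univ _, .refl⟩)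
    ⟨fun j hj => ?_, fun j hj i hi hX => ⟨?_, fun j' hY => ?_⟩⟩ <;>
    simp only [mem_filter, mem_univ, true_and] at hj ⊢
  · rcases Relation.ReflTransGen.cases_tail hj with rfl | ⟨b, hb, hlink⟩
    · exact hover.le
    · by_contra h
      exact hfar b hb 0 (Or.inr ⟨j, hlink, not_le.1 h⟩)
  · by_contra h
    exact hfar j hj 0 (Or.inl ⟨i, hi, hX, not_le.1 h⟩)
  · exact hj.tail ⟨i, hi, hX, hY⟩

lemma sum_le_sum_of_add_eq {X Y P Q : Fin n → Fin m → ℕ} (hsum : X + Y = P + Q) {i : Fin n}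
    {C : Finset (Fin m)} (hX : ∀ j ∈ C, X i j = 0) : ∑ j ∈ C, Q i j ≤ ∑ j ∈ C, Y i j :=
  sum_le_sum fun j hj => by
    have := congrFun (congrFun hsum i) j
    simp only [Pi.add_apply, hX j hj] at this
    omega

namespace IsTrap

variable {X Y : Fin n → Fin m → ℕ} {C : Finset (Fin m)}

lemma le_sum (hC : IsTrap c q i₂ X Y C) {i : Fin n} {j : Fin m} (hj : j ∈ C) (hi : i ≠ i₂)
    (hX : 0 < X i j) : c i ≤ ∑ j ∈ C, Y i j := by
  obtain ⟨hrow, hsupp⟩ := hC.2 j hj i hi hX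
  refine hrow.trans_eq (sum_subset (subset_univ C) fun j' _ hj' => ?_).symm
  by_contra h
  exact hj' (hsupp j' (Nat.pos_of_ne_zero h))

lemma sum_le {P Q : Fin n → Fin m → ℕ} (hC : IsTrap c q i₂ X Y C) (hsum : X + Y = P + Q)
    {i : Fin n} (hi : i ≠ i₂) (hQ : rowSum Q i ≤ c i) : ∑ j ∈ C, Q i j ≤ ∑ j ∈ C, Y i j := by
  by_cases h : ∃ j ∈ C, 0 < X i j
  · obtain ⟨j, hj, hX⟩ := h
    exact (sum_le_sum_of_subset (subset_univ C)).trans (hQ.trans (hC.le_sum hj hi hX))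
  · exact sum_le_sum_of_add_eq hsum fun j hj => by
      by_contra h'
      exact h ⟨j, hj, Nat.pos_of_ne_zero h'⟩

lemma false_of_sum_le {P Q : Fin n → Fin m → ℕ} {j₀ : Fin m} (hC : IsTrap c q i₂ X Y C)
    (hsum : X + Y = P + Q) (hP : ∀ j, colSum P j ≤ q j) (hj₀ : j₀ ∈ C)
    (hover : q j₀ < colSum X j₀) (hQ : ∑ i, ∑ j ∈ C, Q i j ≤ ∑ i, ∑ j ∈ C, Y i j) : False := by
  have hlt : ∑ j ∈ C, colSum P j < ∑ j ∈ C, colSum X j :=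
    sum_lt_sum (fun j hj => (hP j).trans (hC.1 j hj)) ⟨j₀, hj₀, (hP j₀).trans_lt hover⟩
  have heq : ∑ j ∈ C, colSum X j + ∑ j ∈ C, colSum Y j =
      ∑ j ∈ C, colSum P j + ∑ j ∈ C, colSum Q j := by
    simp only [← sum_add_distrib, ← colSum_add, hsum]
  have hY : ∑ j ∈ C, colSum Y j = ∑ i, ∑ j ∈ C, Y i j := sum_comm
  have hQ' : ∑ j ∈ C, colSum Q j = ∑ i, ∑ j ∈ C, Q i j := sum_comm
  omega

end IsTrap

end Trap

section Split

variable {c : Fin n → ℕ} {q : Fin m → ℕ} {i₁ i₂ : Fin n} {A B D E : Fin n → Fin m → ℕ}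

lemma not_isTrap_left (hsum : D + E = A + B) (hAcol : ∀ j, colSum A j ≤ q j)
    (hBrow : ∀ i, rowSum B i ≤ c i) (hD : D i₂ = 0) {j₀ : Fin m} (hover : q j₀ < colSum D j₀)
    (C : Finset (Fin m)) (hj₀ : j₀ ∈ C) : ¬IsTrap c q i₂ D E C := by
  intro hC
  refine hC.false_of_sum_le hsum hAcol hj₀ hover (sum_le_sum fun i _ => ?_)
  by_cases hi : i = i₂
  · subst hi; exact sum_le_sum_of_add_eq hsum fun j _ => congrFun hD j
  · exact hC.sum_le hsum hi (hBrow i)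

lemma not_isTrap_right (h12 : i₁ ≠ i₂) (hc : c i₂ ≤ c i₁) (hsum : D + E = A + B)
    (hA₂ : A i₂ = 0) (hArow : ∀ i, i ≠ i₁ → rowSum A i ≤ c i) (hAcol : ∀ j, colSum A j ≤ q j)
    (hB₁ : B i₁ = 0) (hBrow : ∀ i, rowSum B i ≤ c i) (hBcol : ∀ j, colSum B j ≤ q j)
    {j₀ : Fin m} (hover : q j₀ < colSum E j₀) (C : Finset (Fin m)) (hj₀ : j₀ ∈ C) :
    ¬IsTrap c q i₂ E D C := by
  intro hC
  by_cases h₁ : ∃ j ∈ C, 0 < E i₁ j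
  · obtain ⟨j₁, hj₁, hE⟩ := h₁
    have hsum' : E + D = A + B := by rw [add_comm, hsum]
    refine hC.false_of_sum_le hsum' hAcol hj₀ hover ?_
    -- agent `i₁` fills its capacity `c i₁ ≥ c i₂` inside `C` in `D`, covering `i₂`'s part of `B`
    rw [← Equiv.sum_comp (Equiv.swap i₁ i₂)]
    refine sum_le_sum fun i _ => ?_
    by_cases hi₁ : i = i₁
    · subst hi₁
      rw [Equiv.swap_apply_left]
      exact (sum_le_sum_of_subset (subset_univ C)).trans
        ((hBrow i₂).trans (hc.trans (hC.le_sum hj₁ h12 hE)))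
    by_cases hi₂ : i = i₂
    · subst hi₂; simp [hB₁]
    rw [Equiv.swap_apply_of_ne_of_ne hi₁ hi₂]
    exact hC.sum_le hsum' hi₂ (hBrow i)
  · have hsum' : E + D = B + A := by rw [add_comm, hsum, add_comm]
    refine hC.false_of_sum_le hsum' hBcol hj₀ hover (sum_le_sum fun i _ => ?_)
    by_cases hi₂ : i = i₂
    · subst hi₂; simp [hA₂]
    by_cases hi₁ : i = i₁
    · subst hi₁
      exact sum_le_sum_of_add_eq hsum' fun j hj => by
        by_contra h
        exact h₁ ⟨j, hj, Nat.pos_of_ne_zero h⟩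
    exact hC.sum_le hsum' hi₂ (hArow i hi₁)

lemma exists_overload_lt_of_not_isAlloc (h12 : i₁ ≠ i₂) (hc : c i₂ ≤ c i₁) (hA₂ : A i₂ = 0)
    (hArow : ∀ i, i ≠ i₁ → rowSum A i ≤ c i) (hAcol : ∀ j, colSum A j ≤ q j)
    (hB : IsAlloc c q B) (hB₁ : B i₁ = 0) (hDE : D + E = A + B) (hD : D i₂ = 0)
    (hDrow : ∀ i, rowSum D i ≤ c i) (hErow : ∀ i, rowSum E i ≤ c i)
    (hbad : ¬(IsAlloc c q D ∧ IsAlloc c q E)) :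
    ∃ D' E', D' + E' = A + B ∧ D' i₂ = 0 ∧ (∀ i, rowSum D' i ≤ c i) ∧
      (∀ i, rowSum E' i ≤ c i) ∧ overload q D' E' < overload q D E := by
  have hcol : ∀ j, colSum D j + colSum E j ≤ q j + q j := fun j => by
    rw [← colSum_add, hDE, colSum_add]; exact add_le_add (hAcol j) (hB.2 j)
  obtain ⟨j₀, hover | hover⟩ : ∃ j, q j < colSum D j ∨ q j < colSum E j := by
    by_contra h
    simp only [not_exists, not_or, not_lt] at h
    exact hbad ⟨⟨hDrow, fun j => (h j).1⟩, hErow, fun j => (h j).2⟩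
  · obtain ⟨k, hk⟩ := exists_reachesExit hover (not_isTrap_left hDE hAcol hB.1 hD hover)
    obtain ⟨D', E', hsum, hD', -, hD'row, hE'row, hlt⟩ :=
      exists_overload_lt hDrow hErow hcol hover hk
    exact ⟨D', E', hsum.trans hDE, hD'.trans hD, hD'row, hE'row, hlt⟩
  · obtain ⟨k, hk⟩ := exists_reachesExit hover
      (not_isTrap_right h12 hc hDE hA₂ hArow hAcol hB₁ hB.1 hB.2 hover)
    obtain ⟨E', D', hsum, -, hD', hE'row, hD'row, hlt⟩ :=
      exists_overload_lt hErow hDrow (fun j => (add_comm _ _).trans_le (hcol j)) hover hk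
    refine ⟨D', E', by rw [add_comm, hsum, add_comm, hDE], hD'.trans hD, hD'row, hE'row, ?_⟩
    rwa [overload_comm, overload_comm (X := D)]

theorem exists_isAlloc_split (h12 : i₁ ≠ i₂) (hc : c i₂ ≤ c i₁) (hA₂ : A i₂ = 0)
    (hArow : ∀ i, i ≠ i₁ → rowSum A i ≤ c i) (hAcol : ∀ j, colSum A j ≤ q j)
    (hB : IsAlloc c q B) (hB₁ : B i₁ = 0) (hDE : D + E = A + B) (hD : D i₂ = 0)
    (hDrow : ∀ i, rowSum D i ≤ c i) (hErow : ∀ i, rowSum E i ≤ c i) :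
    ∃ D' E', D' + E' = A + B ∧ D' i₂ = 0 ∧ IsAlloc c q D' ∧ IsAlloc c q E' := by
  induction hk : overload q D E using Nat.strong_induction_on generalizing D E with
  | _ k ih =>
  by_cases hok : IsAlloc c q D ∧ IsAlloc c q E
  · exact ⟨D, E, hDE, hD, hok⟩
  obtain ⟨D', E', hDE', hD', hD'row, hE'row, hlt⟩ :=
    exists_overload_lt_of_not_isAlloc h12 hc hA₂ hArow hAcol hB hB₁ hDE hD hDrow hErow hok
  exact ih _ (hk ▸ hlt) hDE' hD' hD'row hE'row rfl

lemma update_zero_add_single (M : Fin n → Fin m → ℕ) (i : Fin n) :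
    Function.update M i 0 + Pi.single i (M i) = M := by
  funext a
  by_cases ha : a = i
  · subst ha; simp
  · simp [ha]

lemma rowSum_update_zero_le (M : Fin n → Fin m → ℕ) (i a : Fin n) :
    rowSum (Function.update M i 0) a ≤ rowSum M a := by
  conv_rhs => rw [← update_zero_add_single M i]
  rw [rowSum_add]
  omega

lemma colSum_update_zero_add (M : Fin n → Fin m → ℕ) (i : Fin n) (j : Fin m) :
    colSum (Function.update M i 0) j + M i j = colSum M j := by
  conv_rhs => rw [← update_zero_add_single M i]
  rw [colSum_add, colSum_single]

theorem exists_isAlloc_split_moving_row {M : Fin n → Fin m → ℕ} (h12 : i₁ ≠ i₂)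
    (hc : c i₂ ≤ c i₁) (hM : IsAlloc c q M) (hB : IsAlloc c q B) (hB₁ : B i₁ = 0) :
    ∃ D E, IsAlloc c q D ∧ IsAlloc c q E ∧ D i₂ = 0 ∧
      D + E + Pi.single i₂ (M i₂) = M + B + Pi.single i₁ (M i₂) := by
  set M' := Function.update M i₂ 0
  have hM'row : ∀ i, rowSum M' i ≤ c i := fun i => (rowSum_update_zero_le M i₂ i).trans (hM.1 i)
  have hB₁row : rowSum B i₁ = 0 := by simp [rowSum, hB₁]
  obtain ⟨D, E, hDE, hD, hDa, hEa⟩ := exists_isAlloc_split (A := M' + Pi.single i₁ (M i₂))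
    (D := M') (E := Pi.single i₁ (M i₂) + B) h12 hc
    (by simp [M', Ne.symm h12])
    (fun i hi => by simpa [rowSum_add, rowSum_single, hi] using hM'row i)
    (fun j => by
      rw [colSum_add, colSum_single, colSum_update_zero_add]
      exact hM.2 j)
    hB hB₁ (add_assoc _ _ _).symm (by simp [M']) hM'row
    (fun i => by
      rw [rowSum_add, rowSum_single]
      by_cases hi : i = i₁
      · subst hi
        simpa [hB₁row] using (hM.1 i₂).trans hc
      · simpa [hi, rowSum] using hB.1 i)
  refine ⟨D, E, hDa, hEa, hD, ?_⟩
  calc D + E + Pi.single i₂ (M i₂) = M' + Pi.single i₂ (M i₂) + B + Pi.single i₁ (M i₂) := by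
        rw [hDE]; abel
    _ = M + B + Pi.single i₁ (M i₂) := by rw [update_zero_add_single]

end Split

lemma allocVal_add (w : Fin n → Fin m → ℝ) (X Y : Fin n → Fin m → ℕ) :
    allocVal w (X + Y) = allocVal w X + allocVal w Y := by
  simp only [allocVal, Pi.add_apply, Nat.cast_add, add_mul, sum_add_distrib]

lemma allocVal_single (w : Fin n → Fin m → ℝ) (i : Fin n) (r : Fin m → ℕ) :
    allocVal w (Pi.single i r) = ∑ j, (r j : ℝ) * w i j := by
  rw [allocVal, sum_eq_single i (fun a _ ha => by simp [ha]) (by simp)]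
  simp

end BMatching

open BMatching in
theorem exists_good_allocation_excluding_two_general {n m : ℕ}
    (c : Fin n → ℕ) (q : Fin m → ℕ) (w : Fin n → Fin m → ℝ)
    (i₁ i₂ : Fin n) (h12 : i₁ ≠ i₂) (hc : c i₂ ≤ c i₁)
    (M : Fin n → Fin m → ℕ) (hM : IsAlloc c q M)
    (hMmax : ∀ a, IsAlloc c q a → allocVal w a ≤ allocVal w M)
    (M₁ : Fin n → Fin m → ℕ) (hM₁ : IsAlloc c q M₁)
    (hM₁row : ∀ j, M₁ i₁ j = 0) :
    ∃ D : Fin n → Fin m → ℕ, IsAlloc c q D ∧ (∀ j, D i₂ j = 0) ∧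
      allocVal w M₁ + (∑ j, (M i₂ j : ℝ) * w i₁ j) -
          (∑ j, (M i₂ j : ℝ) * w i₂ j) ≤ allocVal w D := by
  obtain ⟨D, E, hD, hE, hD₂, hDE⟩ :=
    exists_isAlloc_split_moving_row h12 hc hM hM₁ (funext hM₁row)
  refine ⟨D, hD, congrFun hD₂, ?_⟩
  have hval := congrArg (allocVal w) hDE
  simp only [allocVal_add, allocVal_single] at hval
  linarith [hMmax E hE]

/-- Given agents `i₁` and `i₂` with `c i₁ ≥ c i₂`, a welfare-maximizing
allocation `M`, and a welfare-maximizing allocation `M₁` among those giving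
nothing to agent `i₁`, there is an allocation `D` giving nothing to agent `i₂`
with `v(D) ≥ v(M₁) + ∑_j M i₂ j · w i₁ j − ∑_j M i₂ j · w i₂ j`. -/
theorem exists_good_allocation_excluding_two {n m : ℕ}
    (c : Fin n → ℕ) (q : Fin m → ℕ) (w : Fin n → Fin m → ℝ)
    (hw : ∀ i j, 0 ≤ w i j)
    (i₁ i₂ : Fin n) (h12 : i₁ ≠ i₂) (hc : c i₂ ≤ c i₁)
    (M : Fin n → Fin m → ℕ) (hM : IsAlloc c q M)
    (hMmax : ∀ a, IsAlloc c q a → allocVal w a ≤ allocVal w M)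
    (M₁ : Fin n → Fin m → ℕ) (hM₁ : IsAlloc c q M₁)
    (hM₁row : ∀ j, M₁ i₁ j = 0)
    (hM₁max : ∀ a, IsAlloc c q a → (∀ j, a i₁ j = 0) →
      allocVal w a ≤ allocVal w M₁) :
    ∃ D : Fin n → Fin m → ℕ, IsAlloc c q D ∧ (∀ j, D i₂ j = 0) ∧
      allocVal w M₁ + (∑ j, (M i₂ j : ℝ) * w i₁ j) -
          (∑ j, (M i₂ j : ℝ) * w i₂ j) ≤ allocVal w D :=
  exists_good_allocation_excluding_two_general c q w i₁ i₂ h12 hc M hM hMmax M₁ hM₁ hM₁row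
end

section
/- In the capacitated b-matching setting, let M be a welfare-maximizing allocation. Then there exists an allocation M^{-1} that maximizes v among allocations whose row 1 is identically zero and such that the vertex of agent 1 is the unique possible source in the difference graph: for every agent i ≠ 1, Σ_j M i j ≤ Σ_j M^{-1} i j, and for every good j, Σ_i M^{-1} i j ≤ Σ_i M i j. -/
/-!
Take `M₁` optimal among the allocations that give nothing to `i₀` and, among those, closest
to `M` in ℓ¹. Read `D = M - M₁` as a flow on the bipartite agent–good graph (positive entries
from agents to goods, negative ones back). Agent `i₀` has no incoming arcs, so a source other
than `i₀` sends a unit along a path to a sink without meeting `i₀`: this is a nonzero `d`,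
vanishing on row `i₀`, conformal to `D` entrywise and in all row and column sums. Then `M₁ + d`
and `M - d` are allocations of total value `v(M₁) + v(M)`, so by the two optimality conditions
`M₁ + d` is optimal too, and it is strictly closer to `M`.
-/

open scoped Interval

lemma Set.exists_max_image_min_image {α β γ : Type*} [LinearOrder β] [LinearOrder γ]
    {s : Set α} (hs : s.Finite) (hne : s.Nonempty) (f : α → β) (g : α → γ) :
    ∃ a ∈ s, (∀ x ∈ s, f x ≤ f a) ∧ ∀ x ∈ s, f x = f a → g a ≤ g x := by
  obtain ⟨a₀, ha₀, hmax⟩ := s.exists_max_image f hs hne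
  obtain ⟨a, ⟨ha, hfa⟩, hmin⟩ := Set.exists_min_image {x ∈ s | f x = f a₀} g
    (hs.subset fun x hx => hx.1) ⟨a₀, ha₀, rfl⟩
  exact ⟨a, ha, fun x hx => hfa ▸ hmax x hx, fun x hx hfx => hmin x ⟨hx, hfx.trans hfa⟩⟩

namespace BMatching

section Flow

variable {V : Type*}

section Arc

variable [DecidableEq V]

def arc (s u : V) : V → V → ℤ := fun v w => if v = s ∧ w = u then 1 else 0

lemma arc_nonneg (s u : V) : 0 ≤ arc s u := fun v w => by
  unfold arc; split_ifs <;> norm_num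

lemma arc_le {f : V → V → ℤ} (hf : 0 ≤ f) {s u : V} (h : 0 < f s u) : arc s u ≤ f := by
  intro v w
  unfold arc
  split_ifs with hvw
  · obtain ⟨rfl, rfl⟩ := hvw
    exact h
  · exact hf v w

end Arc

variable [Fintype V]

def netOutflow (f : V → V → ℤ) (v : V) : ℤ := ∑ w, f v w - ∑ w, f w v

lemma netOutflow_add (f g : V → V → ℤ) (v : V) :
    netOutflow (f + g) v = netOutflow f v + netOutflow g v := by
  simp only [netOutflow, Pi.add_apply, Finset.sum_add_distrib]; ring

lemma netOutflow_sub (f g : V → V → ℤ) (v : V) :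
    netOutflow (f - g) v = netOutflow f v - netOutflow g v := by
  simp only [netOutflow, Pi.sub_apply, Finset.sum_sub_distrib]; ring

lemma exists_arc_of_netOutflow_pos {f : V → V → ℤ} (hf : 0 ≤ f) {s : V}
    (hs : 0 < netOutflow f s) : ∃ u, u ≠ s ∧ 0 < f s u := by
  by_contra! h
  have hout : ∑ w, f s w = f s s :=
    Fintype.sum_eq_single s fun u hu => le_antisymm (h u hu) (hf s u)
  have hin : f s s ≤ ∑ w, f w s :=
    Finset.single_le_sum (fun w _ => hf w s) (Finset.mem_univ s)
  rw [netOutflow, hout] at hs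
  linarith

variable [DecidableEq V]

lemma netOutflow_arc {s u : V} (hsu : s ≠ u) (v : V) :
    netOutflow (arc s u) v = (if v = s then 1 else 0) - (if v = u then 1 else 0) := by
  by_cases hs : v = s <;> by_cases hu : v = u <;> simp_all [netOutflow, arc]

lemma sum_sum_arc (s u : V) : ∑ v, ∑ w, arc s u v w = 1 := by
  simp [arc, ite_and]

theorem exists_subflow_of_netOutflow_pos (f : V → V → ℤ) (hf : 0 ≤ f) (s : V)
    (hs : 0 < netOutflow f s) :
    ∃ g, 0 ≤ g ∧ g ≤ f ∧ 0 < netOutflow g s ∧ (∀ v, netOutflow g v ∈ [[0, netOutflow f v]]) ∧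
      ∀ t, t ≠ s → (∀ u, f u t = 0) → ∀ w, g t w = 0 := by
  obtain ⟨u, hus, hsu⟩ := exists_arc_of_netOutflow_pos hf hs
  have harc := netOutflow_arc hus.symm
  by_cases hu : netOutflow f u < 0
  · refine ⟨arc s u, arc_nonneg s u, arc_le hf hsu, by simp [harc, hus.symm], fun v => ?_,
      fun t hts _ w => by simp [arc, hts]⟩
    by_cases hvs : v = s <;> by_cases hvu : v = u <;>
      simp only [harc, hvs, hvu, Set.mem_uIcc] <;> simp_all <;> omega
  · -- Removing one unit from the arc `s → u` turns `u`, which is not a sink, into a source.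
    obtain ⟨g, hg, hgf, hgu, hgv, hgt⟩ := exists_subflow_of_netOutflow_pos (f - arc s u)
      (sub_nonneg.mpr (arc_le hf hsu)) u (by simp [netOutflow_sub, harc, hus]; omega)
    refine ⟨g + arc s u, add_nonneg hg (arc_nonneg s u), le_sub_iff_add_le.mp hgf, ?_, ?_, ?_⟩
    · have := hgv s
      simp only [netOutflow_sub, harc, Set.mem_uIcc] at this
      simp only [netOutflow_add, harc]
      simp [hus.symm] at this ⊢
      omega
    · intro v
      have := hgv v
      simp only [netOutflow_sub, netOutflow_add, harc, Set.mem_uIcc] at this ⊢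
      by_cases hvs : v = s <;> by_cases hvu : v = u <;> simp_all <;> omega
    · intro t hts ht w
      have htu : t ≠ u := by
        rintro rfl
        exact hsu.ne' (ht s)
      rw [Pi.add_apply, Pi.add_apply, hgt t htu (fun x => by simp [ht x, arc, htu]) w]
      simp [arc, hts]
termination_by (∑ v, ∑ w, f v w).toNat
decreasing_by
  have : f s u ≤ ∑ v, ∑ w, f v w :=
    (Finset.single_le_sum (fun w _ => hf s w) (Finset.mem_univ u)).trans
      (Finset.single_le_sum (fun v _ => Finset.sum_nonneg fun w _ => hf v w) (Finset.mem_univ s))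
  simp only [Pi.sub_apply, Finset.sum_sub_distrib, sum_sum_arc]
  omega

end Flow

section Bipartite

variable {ι κ : Type*}

def bipartiteFlow (D : ι → κ → ℤ) : ι ⊕ κ → ι ⊕ κ → ℤ
  | .inl i, .inr j => max (D i j) 0
  | .inr j, .inl i => max (-D i j) 0
  | _, _ => 0

def ofBipartiteFlow (g : ι ⊕ κ → ι ⊕ κ → ℤ) (i : ι) (j : κ) : ℤ :=
  g (.inl i) (.inr j) - g (.inr j) (.inl i)

lemma bipartiteFlow_nonneg (D : ι → κ → ℤ) : 0 ≤ bipartiteFlow D := by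
  rintro (i | j) (i' | j') <;> simp [bipartiteFlow]

lemma ofBipartiteFlow_bipartiteFlow (D : ι → κ → ℤ) :
    ofBipartiteFlow (bipartiteFlow D) = D := by
  ext i j
  simp only [ofBipartiteFlow, bipartiteFlow]
  omega

lemma ofBipartiteFlow_mem_uIcc {D : ι → κ → ℤ} {g : ι ⊕ κ → ι ⊕ κ → ℤ} (hg : 0 ≤ g)
    (hgD : g ≤ bipartiteFlow D) (i : ι) (j : κ) : ofBipartiteFlow g i j ∈ [[0, D i j]] := by
  have h₁ : 0 ≤ g (.inl i) (.inr j) := hg _ _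
  have h₂ : 0 ≤ g (.inr j) (.inl i) := hg _ _
  have h₃ : g (.inl i) (.inr j) ≤ max (D i j) 0 := hgD _ _
  have h₄ : g (.inr j) (.inl i) ≤ max (-D i j) 0 := hgD _ _
  simp only [ofBipartiteFlow, Set.mem_uIcc]
  omega

variable [Fintype ι] [Fintype κ]

structure IsConformal (d D : ι → κ → ℤ) : Prop where
  entry : ∀ i j, d i j ∈ [[0, D i j]]
  row : ∀ i, ∑ j, d i j ∈ [[0, ∑ j, D i j]]
  col : ∀ j, ∑ i, d i j ∈ [[0, ∑ i, D i j]]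

lemma IsConformal.sub {d D : ι → κ → ℤ} (hd : IsConformal d D) : IsConformal (D - d) D := by
  refine ⟨fun i j => ?_, fun i => ?_, fun j => ?_⟩
  · have := hd.entry i j
    simp only [Pi.sub_apply, Set.mem_uIcc] at this ⊢
    omega
  · have := hd.row i
    simp only [Pi.sub_apply, Finset.sum_sub_distrib, Set.mem_uIcc] at this ⊢
    omega
  · have := hd.col j
    simp only [Pi.sub_apply, Finset.sum_sub_distrib, Set.mem_uIcc] at this ⊢
    omega

section SubFlow

variable {D : ι → κ → ℤ} {g : ι ⊕ κ → ι ⊕ κ → ℤ}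

lemma netOutflow_inl (hg : 0 ≤ g) (hgD : g ≤ bipartiteFlow D) (i : ι) :
    netOutflow g (.inl i) = ∑ j, ofBipartiteFlow g i j := by
  have hout : ∀ i', g (.inl i) (.inl i') = 0 := fun i' =>
    le_antisymm (hgD (.inl i) (.inl i')) (hg _ _)
  have hin : ∀ i', g (.inl i') (.inl i) = 0 := fun i' =>
    le_antisymm (hgD (.inl i') (.inl i)) (hg _ _)
  simp [netOutflow, Fintype.sum_sum_type, hout, hin, ofBipartiteFlow, Finset.sum_sub_distrib]

lemma netOutflow_inr (hg : 0 ≤ g) (hgD : g ≤ bipartiteFlow D) (j : κ) :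
    netOutflow g (.inr j) = -∑ i, ofBipartiteFlow g i j := by
  have hout : ∀ j', g (.inr j) (.inr j') = 0 := fun j' =>
    le_antisymm (hgD (.inr j) (.inr j')) (hg _ _)
  have hin : ∀ j', g (.inr j') (.inr j) = 0 := fun j' =>
    le_antisymm (hgD (.inr j') (.inr j)) (hg _ _)
  simp [netOutflow, Fintype.sum_sum_type, hout, hin, ofBipartiteFlow, Finset.sum_sub_distrib]

end SubFlow

lemma netOutflow_bipartiteFlow_inl (D : ι → κ → ℤ) (i : ι) :
    netOutflow (bipartiteFlow D) (.inl i) = ∑ j, D i j := by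
  rw [netOutflow_inl (bipartiteFlow_nonneg D) le_rfl, ofBipartiteFlow_bipartiteFlow]

lemma netOutflow_bipartiteFlow_inr (D : ι → κ → ℤ) (j : κ) :
    netOutflow (bipartiteFlow D) (.inr j) = -∑ i, D i j := by
  rw [netOutflow_inr (bipartiteFlow_nonneg D) le_rfl, ofBipartiteFlow_bipartiteFlow]

theorem no_source_of_forall_isConformal_eq_zero [DecidableEq ι] [DecidableEq κ]
    (D : ι → κ → ℤ) (i₀ : ι) (hD : ∀ j, 0 ≤ D i₀ j)
    (hzero : ∀ d, IsConformal d D → (∀ j, d i₀ j = 0) → d = 0) :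
    (∀ i, i ≠ i₀ → ∑ j, D i j ≤ 0) ∧ ∀ j, 0 ≤ ∑ i, D i j := by
  have key : ∀ s, s ≠ .inl i₀ → netOutflow (bipartiteFlow D) s ≤ 0 := by
    intro s hs₀
    by_contra! hs
    obtain ⟨g, hg, hgD, hgs, hgv, hgt⟩ :=
      exists_subflow_of_netOutflow_pos _ (bipartiteFlow_nonneg D) s hs
    have hi₀ : ∀ j, ofBipartiteFlow g i₀ j = 0 := by
      intro j
      have h₁ := hgt (.inl i₀) hs₀.symm (by rintro (i | j) <;> simp [bipartiteFlow, hD]) (.inr j)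
      have h₂ : g (.inr j) (.inl i₀) ≤ max (-D i₀ j) 0 := hgD _ _
      have h₃ : 0 ≤ g (.inr j) (.inl i₀) := hg _ _
      have := hD j
      simp only [ofBipartiteFlow, h₁]
      omega
    have hd : IsConformal (ofBipartiteFlow g) D := by
      refine ⟨ofBipartiteFlow_mem_uIcc hg hgD, fun i => ?_, fun j => ?_⟩
      · simpa [netOutflow_inl hg hgD, netOutflow_bipartiteFlow_inl] using hgv (.inl i)
      · have := hgv (.inr j)
        rw [netOutflow_inr hg hgD, netOutflow_bipartiteFlow_inr, Set.mem_uIcc] at this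
        rw [Set.mem_uIcc]
        omega
    have h0 := hzero _ hd hi₀
    rcases s with i | j
    · simp [netOutflow_inl hg hgD, h0] at hgs
    · simp [netOutflow_inr hg hgD, h0] at hgs
  refine ⟨fun i hi => ?_, fun j => ?_⟩
  · simpa [netOutflow_bipartiteFlow_inl] using key (.inl i) (by simpa)
  · simpa [netOutflow_bipartiteFlow_inr] using key (.inr j) (by simp)

end Bipartite

section Allocation

variable {n m : ℕ} {c : Fin n → ℕ} {q : Fin m → ℕ}

lemma finite_setOf_isAlloc (c : Fin n → ℕ) (q : Fin m → ℕ) : {a | IsAlloc c q a}.Finite :=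
  (Set.finite_Iic fun i _ => c i).subset fun _ ha i j =>
    (Finset.single_le_sum (fun _ _ => Nat.zero_le _) (Finset.mem_univ j)).trans (ha.1 i)

lemma exists_isAlloc_of_isConformal {a M : Fin n → Fin m → ℕ} {d : Fin n → Fin m → ℤ}
    (ha : IsAlloc c q a) (hM : IsAlloc c q M)
    (hd : IsConformal d fun i j => (M i j : ℤ) - a i j) :
    ∃ a' : Fin n → Fin m → ℕ, IsAlloc c q a' ∧ ∀ i j, (a' i j : ℤ) = a i j + d i j := by
  have hcast : ∀ i j, ((a i j + d i j).toNat : ℤ) = a i j + d i j := fun i j => by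
    have := hd.entry i j
    rw [Set.mem_uIcc] at this
    omega
  refine ⟨fun i j => (a i j + d i j).toNat, ⟨fun i => ?_, fun j => ?_⟩, hcast⟩
  · have h₁ := hd.row i
    have h₂ := ha.1 i
    have h₃ := hM.1 i
    rw [← Nat.cast_le (α := ℤ), Nat.cast_sum] at h₂ h₃ ⊢
    simp only [hcast, Finset.sum_add_distrib, Finset.sum_sub_distrib, Set.mem_uIcc] at h₁ ⊢
    omega
  · have h₁ := hd.col j
    have h₂ := ha.2 j
    have h₃ := hM.2 j
    rw [← Nat.cast_le (α := ℤ), Nat.cast_sum] at h₂ h₃ ⊢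
    simp only [hcast, Finset.sum_add_distrib, Finset.sum_sub_distrib, Set.mem_uIcc] at h₁ ⊢
    omega

lemma allocVal_add_allocVal_eq (w : Fin n → Fin m → ℝ) {x y a b : Fin n → Fin m → ℕ}
    (h : ∀ i j, (x i j : ℤ) + y i j = a i j + b i j) :
    allocVal w x + allocVal w y = allocVal w a + allocVal w b := by
  simp only [allocVal, ← Finset.sum_add_distrib, ← add_mul]
  refine Finset.sum_congr rfl fun i _ => Finset.sum_congr rfl fun j _ => ?_
  rw [show (x i j : ℝ) + y i j = a i j + b i j by exact_mod_cast h i j]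

def l1Dist (x y : Fin n → Fin m → ℕ) : ℕ := ∑ i, ∑ j, Nat.dist (x i j) (y i j)

lemma l1Dist_lt_of_isConformal {a M a' : Fin n → Fin m → ℕ} {d : Fin n → Fin m → ℤ}
    (hd : ∀ i j, d i j ∈ [[0, (M i j : ℤ) - a i j]]) (hne : d ≠ 0)
    (ha' : ∀ i j, (a' i j : ℤ) = a i j + d i j) : l1Dist M a' < l1Dist M a := by
  have hle : ∀ i j, Nat.dist (M i j) (a' i j) ≤ Nat.dist (M i j) (a i j) := fun i j => by
    have h₁ := hd i j
    have h₂ := ha' i j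
    rw [Set.mem_uIcc] at h₁
    unfold Nat.dist
    omega
  obtain ⟨i, hi⟩ := Function.ne_iff.mp hne
  obtain ⟨j, hj⟩ := Function.ne_iff.mp hi
  have hlt : Nat.dist (M i j) (a' i j) < Nat.dist (M i j) (a i j) := by
    have h₁ := hd i j
    have h₂ := ha' i j
    rw [Set.mem_uIcc] at h₁
    simp only [Pi.zero_apply] at hj
    unfold Nat.dist
    omega
  exact Finset.sum_lt_sum (fun i _ => Finset.sum_le_sum fun j _ => hle i j)
    ⟨i, Finset.mem_univ i, Finset.sum_lt_sum (fun j _ => hle i j) ⟨j, Finset.mem_univ j, hlt⟩⟩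

theorem isConformal_eq_zero_of_closest {w : Fin n → Fin m → ℝ} {i₀ : Fin n}
    {M a : Fin n → Fin m → ℕ} {d : Fin n → Fin m → ℤ}
    (hM : IsAlloc c q M) (hMmax : ∀ x, IsAlloc c q x → allocVal w x ≤ allocVal w M)
    (ha : IsAlloc c q a) (ha₀ : ∀ j, a i₀ j = 0)
    (hopt : ∀ x, IsAlloc c q x → (∀ j, x i₀ j = 0) → allocVal w x ≤ allocVal w a)
    (hclose : ∀ x, IsAlloc c q x → (∀ j, x i₀ j = 0) → allocVal w x = allocVal w a →
      l1Dist M a ≤ l1Dist M x)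
    (hd : IsConformal d fun i j => (M i j : ℤ) - a i j) (hd₀ : ∀ j, d i₀ j = 0) : d = 0 := by
  by_contra hne
  obtain ⟨a', ha', ha'd⟩ := exists_isAlloc_of_isConformal ha hM hd
  obtain ⟨M', hM', hM'd⟩ := exists_isAlloc_of_isConformal ha hM hd.sub
  have ha'₀ : ∀ j, a' i₀ j = 0 := fun j => by
    have := ha'd i₀ j
    rw [ha₀, hd₀] at this
    omega
  have hsum : allocVal w a' + allocVal w M' = allocVal w a + allocVal w M :=
    allocVal_add_allocVal_eq w fun i j => by rw [ha'd, hM'd]; simp only [Pi.sub_apply]; ring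
  have hval : allocVal w a' = allocVal w a := by
    linarith [hopt a' ha' ha'₀, hMmax M' hM']
  exact (hclose a' ha' ha'₀ hval).not_gt (l1Dist_lt_of_isConformal hd.entry hne ha'd)

end Allocation

end BMatching

theorem exists_excluded_opt_unique_source_general {n m : ℕ}
    (c : Fin n → ℕ) (q : Fin m → ℕ) (w : Fin n → Fin m → ℝ)
    (i₀ : Fin n)
    (M : Fin n → Fin m → ℕ) (hM : IsAlloc c q M)
    (hMmax : ∀ a, IsAlloc c q a → allocVal w a ≤ allocVal w M) :
    ∃ M₁ : Fin n → Fin m → ℕ, IsAlloc c q M₁ ∧ (∀ j, M₁ i₀ j = 0) ∧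
      (∀ a, IsAlloc c q a → (∀ j, a i₀ j = 0) → allocVal w a ≤ allocVal w M₁) ∧
      (∀ i, i ≠ i₀ → ∑ j, M i j ≤ ∑ j, M₁ i j) ∧
      (∀ j, ∑ i, M₁ i j ≤ ∑ i, M i j) := by
  obtain ⟨a, ⟨ha, ha₀⟩, hopt, hclose⟩ :=
    Set.exists_max_image_min_image (s := {x | IsAlloc c q x ∧ ∀ j, x i₀ j = 0})
      ((BMatching.finite_setOf_isAlloc c q).subset fun x hx => hx.1)
      ⟨0, ⟨fun i => by simp, fun j => by simp⟩, fun j => rfl⟩ (allocVal w) (BMatching.l1Dist M)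
  have hzero := fun d => BMatching.isConformal_eq_zero_of_closest (d := d) hM hMmax ha ha₀
    (fun x hx hx₀ => hopt x ⟨hx, hx₀⟩) (fun x hx hx₀ => hclose x ⟨hx, hx₀⟩)
  obtain ⟨hrow, hcol⟩ :=
    BMatching.no_source_of_forall_isConformal_eq_zero _ i₀ (fun j => by simp [ha₀]) hzero
  refine ⟨a, ha, ha₀, fun x hx hx₀ => hopt x ⟨hx, hx₀⟩, fun i hi => ?_, fun j => ?_⟩
  · have := hrow i hi
    simp only [Finset.sum_sub_distrib, sub_nonpos] at this
    exact_mod_cast this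
  · have := hcol j
    simp only [Finset.sum_sub_distrib, sub_nonneg] at this
    exact_mod_cast this

/-- For a welfare-maximizing allocation `M` there is an allocation `M₁`
maximizing welfare among those giving nothing to agent `i₀` such that the vertex
of agent `i₀` is the only possible source in the difference graph: every other
agent receives at least as much in `M₁` as in `M`, and every good is used in
`M₁` at most as much as in `M`. -/
theorem exists_excluded_opt_unique_source {n m : ℕ}
    (c : Fin n → ℕ) (q : Fin m → ℕ) (w : Fin n → Fin m → ℝ)
    (hw : ∀ i j, 0 ≤ w i j) (i₀ : Fin n)
    (M : Fin n → Fin m → ℕ) (hM : IsAlloc c q M)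
    (hMmax : ∀ a, IsAlloc c q a → allocVal w a ≤ allocVal w M) :
    ∃ M₁ : Fin n → Fin m → ℕ, IsAlloc c q M₁ ∧ (∀ j, M₁ i₀ j = 0) ∧
      (∀ a, IsAlloc c q a → (∀ j, a i₀ j = 0) → allocVal w a ≤ allocVal w M₁) ∧
      (∀ i, i ≠ i₀ → ∑ j, M i j ≤ ∑ j, M₁ i j) ∧
      (∀ j, ∑ i, M₁ i j ≤ ∑ i, M i j) :=
  exists_excluded_opt_unique_source_general c q w i₀ M hM hMmax
end

section
/- In the capacitated b-matching setting, let M be a welfare-maximizing allocation and M^{-1} a welfare-maximizing allocation among those whose row 1 is identically zero. Then every cycle in the difference graph of M and M^{-1} has value exactly zero: for any t ≥ 1, distinct agents i_1, …, i_t and distinct goods j_1, …, j_t such that M i_s j_s > M^{-1} i_s j_s and M^{-1} i_{s+1} j_s > M i_{s+1} j_s for all s (indices taken modulo t), it holds that Σ_s (w i_s j_s − w i_{s+1} j_s) = 0. -/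
/-!
Push one unit around the cycle: removing a unit of `M` on every arc agent → good and adding
one on every arc good → agent leaves every row and column sum unchanged, so the result is
again an allocation, and its value is `v(M)` minus the value of the cycle; optimality of `M`
makes the cycle value nonnegative. The reverse exchange on `M₁` keeps row `i₀` empty, because
every agent on the cycle receives a unit of `M₁` and so differs from `i₀`; optimality of `M₁`
makes the cycle value nonpositive.
-/

open Finset

theorem sum_add_tsub_eq_of_sum_eq {ι : Type*} (s : Finset ι) {x y z : ι → ℕ}
    (hzx : ∀ k ∈ s, z k ≤ x k) (hyz : ∑ k ∈ s, y k = ∑ k ∈ s, z k) :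
    ∑ k ∈ s, (x k + y k - z k) = ∑ k ∈ s, x k := by
  rw [sum_tsub_distrib s fun k hk => (hzx k hk).trans (Nat.le_add_right _ _),
    sum_add_distrib, hyz, Nat.add_sub_cancel]

section Exchange

variable {n m : ℕ}

theorem IsAlloc.add_tsub {c : Fin n → ℕ} {q : Fin m → ℕ} {a P N : Fin n → Fin m → ℕ}
    (ha : IsAlloc c q a) (hNa : ∀ i j, N i j ≤ a i j)
    (hrow : ∀ i, ∑ j, P i j = ∑ j, N i j) (hcol : ∀ j, ∑ i, P i j = ∑ i, N i j) :
    IsAlloc c q (fun i j => a i j + P i j - N i j) :=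
  ⟨fun i => (sum_add_tsub_eq_of_sum_eq _ (fun j _ => hNa i j) (hrow i)).trans_le (ha.1 i),
    fun j => (sum_add_tsub_eq_of_sum_eq _ (fun i _ => hNa i j) (hcol j)).trans_le (ha.2 j)⟩

theorem allocVal_add_tsub (w : Fin n → Fin m → ℝ) {a P N : Fin n → Fin m → ℕ}
    (hNa : ∀ i j, N i j ≤ a i j) :
    allocVal w (fun i j => a i j + P i j - N i j) =
      allocVal w a + allocVal w P - allocVal w N := by
  simp only [allocVal, ← sum_add_distrib, ← sum_sub_distrib]
  refine sum_congr rfl fun i _ => sum_congr rfl fun j _ => ?_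
  rw [Nat.cast_sub ((hNa i j).trans (Nat.le_add_right _ _)), Nat.cast_add]
  ring

end Exchange

section CellCount

variable {ι : Type*} [Fintype ι] {n m : ℕ}

def cellCount (f : ι → Fin n) (g : ι → Fin m) (i : Fin n) (j : Fin m) : ℕ :=
  #{s | f s = i ∧ g s = j}

theorem sum_cellCount_row (f : ι → Fin n) (g : ι → Fin m) (i : Fin n) :
    ∑ j, cellCount f g i j = #{s | f s = i} := by
  simp only [cellCount, ← filter_filter]
  exact (card_eq_sum_card_fiberwise fun _ _ => mem_univ _).symm

theorem sum_cellCount_col (f : ι → Fin n) (g : ι → Fin m) (j : Fin m) :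
    ∑ i, cellCount f g i j = #{s | g s = j} := by
  simp only [cellCount, and_comm (a := f _ = _), ← filter_filter]
  exact (card_eq_sum_card_fiberwise fun _ _ => mem_univ _).symm

theorem allocVal_cellCount (w : Fin n → Fin m → ℝ) (f : ι → Fin n) (g : ι → Fin m) :
    allocVal w (cellCount f g) = ∑ s, w (f s) (g s) := by
  have hcell : ∀ i j, (cellCount f g i j : ℝ) * w i j =
      ∑ s ∈ {s | f s = i} with g s = j, w (f s) (g s) := by
    intro i j
    rw [cellCount, ← filter_filter, ← nsmul_eq_mul, ← sum_const]
    exact sum_congr rfl fun s hs => by simp_all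
  simp only [allocVal, hcell, sum_fiberwise]

theorem cellCount_le_one {g : ι → Fin m} (hg : Function.Injective g) (f : ι → Fin n)
    (i : Fin n) (j : Fin m) : cellCount f g i j ≤ 1 :=
  card_le_one.2 fun s hs s' hs' => by
    simp only [mem_filter] at hs hs'
    exact hg (hs.2.2.trans hs'.2.2.symm)

theorem cellCount_le_of_injective {g : ι → Fin m} (hg : Function.Injective g)
    {f : ι → Fin n} {a : Fin n → Fin m → ℕ} (ha : ∀ s, 0 < a (f s) (g s)) (i : Fin n)
    (j : Fin m) : cellCount f g i j ≤ a i j := by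
  obtain h | ⟨s, hs⟩ := ({s | f s = i ∧ g s = j} : Finset ι).eq_empty_or_nonempty
  · simp [cellCount, h]
  · obtain ⟨-, rfl, rfl⟩ := mem_filter.1 hs
    exact (cellCount_le_one hg f _ _).trans (ha s)

theorem cellCount_eq_zero {f : ι → Fin n} {i : Fin n} (hf : ∀ s, f s ≠ i) (g : ι → Fin m)
    (j : Fin m) : cellCount f g i j = 0 := by
  simp [cellCount, hf]

end CellCount

theorem difference_graph_cycle_value_zero_general {n m : ℕ}
    (c : Fin n → ℕ) (q : Fin m → ℕ) (w : Fin n → Fin m → ℝ)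
    (i₀ : Fin n)
    (M : Fin n → Fin m → ℕ) (hM : IsAlloc c q M)
    (hMmax : ∀ a, IsAlloc c q a → allocVal w a ≤ allocVal w M)
    (M₁ : Fin n → Fin m → ℕ) (hM₁ : IsAlloc c q M₁)
    (hM₁row : ∀ j, M₁ i₀ j = 0)
    (hM₁max : ∀ a, IsAlloc c q a → (∀ j, a i₀ j = 0) →
      allocVal w a ≤ allocVal w M₁)
    (t : ℕ) [NeZero t]
    (ag : Fin t → Fin n)
    (gd : Fin t → Fin m) (hgd : Function.Injective gd)
    (harc₁ : ∀ s : Fin t, M₁ (ag s) (gd s) < M (ag s) (gd s))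
    (harc₂ : ∀ s : Fin t, M (ag (s + 1)) (gd s) < M₁ (ag (s + 1)) (gd s)) :
    ∑ s : Fin t, (w (ag s) (gd s) - w (ag (s + 1)) (gd s)) = 0 := by
  set N := cellCount ag gd
  set P := cellCount (fun s => ag (s + 1)) gd
  have hNM : ∀ i j, N i j ≤ M i j :=
    cellCount_le_of_injective hgd fun s => Nat.zero_lt_of_lt (harc₁ s)
  have hPM₁ : ∀ i j, P i j ≤ M₁ i j :=
    cellCount_le_of_injective hgd fun s => Nat.zero_lt_of_lt (harc₂ s)
  have hrow : ∀ i, ∑ j, P i j = ∑ j, N i j := fun i => by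
    simp only [P, N, sum_cellCount_row, card_filter]
    exact Equiv.sum_comp (Equiv.addRight 1) fun s => if ag s = i then 1 else 0
  have hcol : ∀ j, ∑ i, P i j = ∑ i, N i j := fun j => by
    simp only [P, N, sum_cellCount_col]
  have hag_ne : ∀ s, ag s ≠ i₀ := fun s hs => by
    have := harc₂ (s - 1)
    rw [sub_add_cancel, hs, hM₁row] at this
    exact Nat.not_lt_zero _ this
  have hM₁'row : ∀ j, M₁ i₀ j + N i₀ j - P i₀ j = 0 := fun j => by
    rw [hM₁row, show N i₀ j = 0 from cellCount_eq_zero hag_ne gd j,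
      show P i₀ j = 0 from cellCount_eq_zero (fun s => hag_ne (s + 1)) gd j]
  have hM' := hMmax _ (hM.add_tsub hNM hrow hcol)
  have hM₁' := hM₁max _ (hM₁.add_tsub hPM₁ (fun i => (hrow i).symm) fun j => (hcol j).symm)
    hM₁'row
  rw [allocVal_add_tsub w hNM, allocVal_cellCount, allocVal_cellCount] at hM'
  rw [allocVal_add_tsub w hPM₁, allocVal_cellCount, allocVal_cellCount] at hM₁'
  rw [sum_sub_distrib]
  linarith

/-- If `M` maximizes welfare and `M₁` maximizes welfare among allocations giving
nothing to agent `i₀`, then every cycle in the difference graph of `M` and `M₁`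
has value exactly zero. The cycle alternates agents `ag s` and goods `gd s`
(indices modulo `t`), with arc `ag s → gd s` when `M (ag s) (gd s) > M₁ (ag s) (gd s)`
and arc `gd s → ag (s+1)` when `M₁ (ag (s+1)) (gd s) > M (ag (s+1)) (gd s)`. -/
theorem difference_graph_cycle_value_zero {n m : ℕ}
    (c : Fin n → ℕ) (q : Fin m → ℕ) (w : Fin n → Fin m → ℝ)
    (hw : ∀ i j, 0 ≤ w i j) (i₀ : Fin n)
    (M : Fin n → Fin m → ℕ) (hM : IsAlloc c q M)
    (hMmax : ∀ a, IsAlloc c q a → allocVal w a ≤ allocVal w M)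
    (M₁ : Fin n → Fin m → ℕ) (hM₁ : IsAlloc c q M₁)
    (hM₁row : ∀ j, M₁ i₀ j = 0)
    (hM₁max : ∀ a, IsAlloc c q a → (∀ j, a i₀ j = 0) →
      allocVal w a ≤ allocVal w M₁)
    (t : ℕ) [NeZero t]
    (ag : Fin t → Fin n) (hag : Function.Injective ag)
    (gd : Fin t → Fin m) (hgd : Function.Injective gd)
    (harc₁ : ∀ s : Fin t, M₁ (ag s) (gd s) < M (ag s) (gd s))
    (harc₂ : ∀ s : Fin t, M (ag (s + 1)) (gd s) < M₁ (ag (s + 1)) (gd s)) :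
    ∑ s : Fin t, (w (ag s) (gd s) - w (ag (s + 1)) (gd s)) = 0 :=
  difference_graph_cycle_value_zero_general c q w i₀ M hM hMmax M₁ hM₁ hM₁row hM₁max t ag gd hgd
    harc₁ harc₂
end

section
/- If all agent capacities are equal, then the VCG mechanism with Clarke-pivot payments is envy-free: in the capacitated b-matching setting with c i = c k for all agents i, k, for any welfare-maximizing allocation M, welfare-maximizing allocations M^{-k} excluding each agent k, and Clarke-pivot payments p_k = v(M^{-k}) − v(M) + Σ_j M k j · w k j, it holds for all agents i and k that Σ_j M i j · w i j − p_i ≥ Σ_j M k j · w i j − p_k. -/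
/-!
Hand agent `k`'s bundle in `M` over to agent `i`. The resulting matrix `u` gives agent `i` at most
`c i + c k ≤ 2 c i` units and agent `k` nothing, while `M^{-i}` gives agent `i` nothing; together
they split as `u + M^{-i} = Y + Z` into two allocations with `Y` avoiding agent `k`. Hence
`v(Y) ≤ v(M^{-k})` and `v(Z) ≤ v(M)`, and since `v(u) = v(M) - M_k·w_k + M_k·w_i` this is
`v(M^{-i}) + M_k·w_i ≤ v(M^{-k}) + M_k·w_k`, i.e. agent `i` does not envy agent `k`.

The split starts from `Y = u`, `Z = M^{-i}` and moves units between `Y` and `Z` along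
alternating paths out of agent `i` until agent `i`'s row of `Y` fits its capacity. If no such
path ends at a vertex with slack, counting the units across the boundary of the set of vertices
reachable from `i` contradicts the capacity bounds.
-/

open Finset

def ReachWithin {V : Type*} (r : V → V → Prop) (s : V) : ℕ → V → Prop
  | 0, v => v = s
  | d + 1, v => ReachWithin r s d v ∨ ∃ u, ReachWithin r s d u ∧ r u v

theorem ReachWithin.of_forall_ne {V : Type*} {r r' : V → V → Prop} {s v : V}
    (hrr' : ∀ x w, x ≠ v → w ≠ v → r x w → r' x w) :
    ∀ {d w}, ¬ ReachWithin r s d v → ReachWithin r s d w → ReachWithin r' s d w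
  | 0, _, _, hw => hw
  | d + 1, w, hv, hw => by
    have hv' : ¬ ReachWithin r s d v := fun h => hv (.inl h)
    rcases hw with hw | ⟨x, hx, hxw⟩
    · exact .inl (of_forall_ne hrr' hv' hw)
    · refine .inr ⟨x, of_forall_ne hrr' hv' hx, hrr' x w ?_ ?_ hxw⟩
      · rintro rfl; exact hv' hx
      · rintro rfl; exact hv (.inr ⟨x, hx, hxw⟩)

namespace Bipartite

variable {α β : Type*}

def residualAdj (B y : α → β → ℤ) : α ⊕ β → α ⊕ β → Prop
  | .inl a, .inr b => 0 < y a b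
  | .inr b, .inl a => y a b < B a b
  | _, _ => False

theorem add_single_mem_Icc [DecidableEq α] [DecidableEq β] {B y : α → β → ℤ} (hy0 : 0 ≤ y)
    (hyB : y ≤ B) {a : α} {b : β} {e : ℤ} (h0 : 0 ≤ y a b + e) (hB : y a b + e ≤ B a b) :
    (0 ≤ fun x z => y x z + if x = a ∧ z = b then e else 0) ∧
      (fun x z => y x z + if x = a ∧ z = b then e else 0) ≤ B := by
  constructor <;> intro x z <;> dsimp only <;> split_ifs with h
  · exact h.1 ▸ h.2 ▸ h0
  · simpa using hy0 x z
  · exact h.1 ▸ h.2 ▸ hB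
  · simpa using hyB x z

variable [Fintype α] [Fintype β]

/-- Negating the column sums makes moving one unit of `y` along a residual edge `u → v` change
this by `-δ_u + δ_v`. -/
def signedDeg (y : α → β → ℤ) : α ⊕ β → ℤ :=
  Sum.elim (fun a => ∑ b, y a b) (fun b => -∑ a, y a b)

variable [DecidableEq α]

theorem sum_signedDeg_disjSum {B y : α → β → ℤ} (A : Finset α) (C : Finset β)
    (hA : ∀ a ∈ A, ∀ b ∉ C, y a b = 0) (hC : ∀ b ∈ C, ∀ a ∉ A, y a b = B a b) :
    ∑ v ∈ A.disjSum C, signedDeg y v = -∑ a ∈ Aᶜ, ∑ b ∈ C, B a b := by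
  have hrow : ∀ a ∈ A, ∑ b, y a b = ∑ b ∈ C, y a b := fun a ha =>
    (sum_subset (subset_univ C) fun b _ hb => hA a ha b hb).symm
  have hcol : ∀ b ∈ C, ∑ a, y a b = ∑ a ∈ A, y a b + ∑ a ∈ Aᶜ, B a b := fun b hb => by
    rw [← sum_add_sum_compl A, sum_congr rfl fun a ha => hC b hb a (mem_compl.1 ha)]
  simp only [sum_disjSum, signedDeg, Sum.elim_inl, Sum.elim_inr, sum_neg_distrib]
  rw [sum_congr rfl hrow, sum_congr rfl hcol, sum_add_distrib, sum_comm (s := A),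
    sum_comm (s := Aᶜ)]
  ring

theorem exists_reachWithin_lt_of_cut {B y : α → β → ℤ} {cap : α ⊕ β → ℤ} {s : α ⊕ β}
    (hcut : ∀ (A : Finset α) (C : Finset β), s ∈ A.disjSum C →
      0 ≤ ∑ v ∈ A.disjSum C, cap v + ∑ a ∈ Aᶜ, ∑ b ∈ C, B a b)
    (hy0 : 0 ≤ y) (hyB : y ≤ B) (hs : cap s < signedDeg y s) :
    ∃ d v, v ≠ s ∧ ReachWithin (residualAdj B y) s d v ∧ signedDeg y v < cap v := by
  classical
  by_contra! hblocked
  let R : α ⊕ β → Prop := fun v => ∃ d, ReachWithin (residualAdj B y) s d v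
  have hR : ∀ u v, R u → residualAdj B y u v → R v := fun u v ⟨d, hu⟩ huv =>
    ⟨d + 1, .inr ⟨u, hu, huv⟩⟩
  set A := univ.filter fun a => R (.inl a)
  set C := univ.filter fun b => R (.inr b)
  have hmem : ∀ v, v ∈ A.disjSum C ↔ R v := by rintro (a | b) <;> simp [A, C]
  have hA : ∀ a ∈ A, ∀ b ∉ C, y a b = 0 := fun a ha b hb => by
    by_contra hne
    exact hb (mem_filter.2 ⟨mem_univ _,
      hR (.inl a) (.inr b) (mem_filter.1 ha).2 ((hy0 a b).lt_of_ne' hne)⟩)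
  have hC : ∀ b ∈ C, ∀ a ∉ A, y a b = B a b := fun b hb a ha => by
    by_contra hne
    exact ha (mem_filter.2 ⟨mem_univ _,
      hR (.inr b) (.inl a) (mem_filter.1 hb).2 ((hyB a b).lt_of_ne hne)⟩)
  have hsR : s ∈ A.disjSum C := (hmem s).2 ⟨0, rfl⟩
  have hlt : ∑ v ∈ A.disjSum C, cap v < ∑ v ∈ A.disjSum C, signedDeg y v :=
    sum_lt_sum (fun v hv => by
      rcases eq_or_ne v s with rfl | hvs
      · exact hs.le
      · obtain ⟨d, hd⟩ := (hmem v).1 hv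
        exact hblocked d v hvs hd) ⟨s, hsR, hs⟩
  have := hcut A C hsR
  rw [sum_signedDeg_disjSum A C hA hC] at hlt
  linarith

variable [DecidableEq β]

theorem signedDeg_add_single (y : α → β → ℤ) (a : α) (b : β) (e : ℤ) :
    signedDeg (fun x z => y x z + if x = a ∧ z = b then e else 0) =
      signedDeg y + Pi.single (.inl a) e - Pi.single (.inr b) e := by
  ext (a' | b')
  · by_cases h : a' = a <;> simp [signedDeg, h, sum_add_distrib]
  · by_cases h : b' = b <;> simp [signedDeg, h, sum_add_distrib, sub_eq_add_neg, add_comm]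

theorem exists_push {B y : α → β → ℤ} (hy0 : 0 ≤ y) (hyB : y ≤ B) {u v : α ⊕ β}
    (huv : residualAdj B y u v) :
    ∃ y', 0 ≤ y' ∧ y' ≤ B ∧
      signedDeg y' = signedDeg y - Pi.single u 1 + Pi.single v 1 ∧
      ∀ x w, x ≠ v → w ≠ v → residualAdj B y x w → residualAdj B y' x w := by
  rcases u with a | b <;> rcases v with a' | b'
  · exact huv.elim
  · have hyB' : y a b' ≤ B a b' := hyB a b'
    obtain ⟨h0, hB⟩ := add_single_mem_Icc (a := a) (b := b') (e := -1) hy0 hyB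
      (by linarith [show 0 < y a b' from huv]) (by linarith)
    refine ⟨_, h0, hB, ?_, ?_⟩
    · simp only [signedDeg_add_single, Pi.single_neg]; abel
    · rintro (x | z) (x | z) hx hw h <;> simp_all [residualAdj]
  · have hy0' : 0 ≤ y a' b := hy0 a' b
    obtain ⟨h0, hB⟩ := add_single_mem_Icc (a := a') (b := b) (e := 1) hy0 hyB (by linarith)
      (by linarith [show y a' b < B a' b from huv])
    refine ⟨_, h0, hB, ?_, ?_⟩
    · rw [signedDeg_add_single]; abel
    · rintro (x | z) (x | z) hx hw h <;> simp_all [residualAdj]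
  · exact huv.elim

theorem exists_augment {B y : α → β → ℤ} (hy0 : 0 ≤ y) (hyB : y ≤ B) {s v : α ⊕ β} {d : ℕ}
    (hv : ReachWithin (residualAdj B y) s d v) :
    ∃ y', 0 ≤ y' ∧ y' ≤ B ∧ signedDeg y' = signedDeg y - Pi.single s 1 + Pi.single v 1 := by
  induction d generalizing y v with
  | zero => exact ⟨y, hy0, hyB, by rw [show v = s from hv]; abel⟩
  | succ d ih =>
    by_cases hvd : ReachWithin (residualAdj B y) s d v
    · exact ih hy0 hyB hvd
    obtain ⟨u, hu, huv⟩ := hv.resolve_left hvd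
    obtain ⟨y₁, hy₁0, hy₁B, hdeg₁, hadj₁⟩ := exists_push hy0 hyB huv
    -- a shortest path to `u` avoids `v`, so it survives the push along `u → v`
    obtain ⟨y', hy'0, hy'B, hdeg'⟩ := ih hy₁0 hy₁B (hu.of_forall_ne hadj₁ hvd)
    exact ⟨y', hy'0, hy'B, by rw [hdeg', hdeg₁]; abel⟩

theorem exists_signedDeg_mem_Icc {B : α → β → ℤ} {low cap : α ⊕ β → ℤ} {s : α ⊕ β}
    (hcut : ∀ (A : Finset α) (C : Finset β), s ∈ A.disjSum C →
      0 ≤ ∑ v ∈ A.disjSum C, cap v + ∑ a ∈ Aᶜ, ∑ b ∈ C, B a b)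
    (hs : low s ≤ cap s) {y : α → β → ℤ} (hy0 : 0 ≤ y) (hyB : y ≤ B)
    (hlow : low ≤ signedDeg y) (hcap : ∀ v ≠ s, signedDeg y v ≤ cap v) :
    ∃ y', 0 ≤ y' ∧ y' ≤ B ∧ low ≤ signedDeg y' ∧ signedDeg y' ≤ cap := by
  obtain ⟨N, hN⟩ : ∃ N : ℕ, signedDeg y s - cap s ≤ N := ⟨_, Int.self_le_toNat _⟩
  induction N generalizing y with
  | zero =>
    refine ⟨y, hy0, hyB, hlow, fun v => show signedDeg y v ≤ cap v from ?_⟩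
    rcases eq_or_ne v s with rfl | hvs
    · omega
    · exact hcap v hvs
  | succ N ih =>
    rcases le_or_gt (signedDeg y s) (cap s) with hsy | hsy
    · exact ⟨y, hy0, hyB, hlow, fun v => (eq_or_ne v s).elim (· ▸ hsy) (hcap v)⟩
    obtain ⟨d, v, hvs, hv, hvcap⟩ := exists_reachWithin_lt_of_cut hcut hy0 hyB hsy
    obtain ⟨y', hy'0, hy'B, hdeg⟩ := exists_augment hy0 hyB hv
    have hdeg' : ∀ w, signedDeg y' w =
        signedDeg y w - (if w = s then 1 else 0) + (if w = v then 1 else 0) := fun w => by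
      simp [hdeg, Pi.single_apply]
    refine ih hy'0 hy'B (fun w => show low w ≤ signedDeg y' w from ?_) (fun w hws => ?_) ?_
    · have : low w ≤ signedDeg y w := hlow w
      rw [hdeg']; split_ifs <;> subst_vars <;> omega
    · have := hcap w hws
      rw [hdeg']; split_ifs <;> subst_vars <;> omega
    · rw [hdeg', if_pos rfl, if_neg hvs.symm]; omega

end Bipartite

open Bipartite

section Split

variable {n m : ℕ} {c : Fin n → ℕ} {q : Fin m → ℕ}

/-- With `G = Y + Z`, the bounds `allocLow c q G ≤ signedDeg Y ≤ allocCap c q G` say that both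
`Y` and `Z` are allocations. -/
def allocLow (c : Fin n → ℕ) (q : Fin m → ℕ) (G : Fin n → Fin m → ℕ) : Fin n ⊕ Fin m → ℤ :=
  Sum.elim (fun l => ∑ j, (G l j : ℤ) - c l) (fun j => -q j)

def allocCap (c : Fin n → ℕ) (q : Fin m → ℕ) (G : Fin n → Fin m → ℕ) : Fin n ⊕ Fin m → ℤ :=
  Sum.elim (fun l => c l) (fun j => q j - ∑ l, (G l j : ℤ))

theorem isAlloc_of_signedDeg_mem_Icc {G y : Fin n → Fin m → ℕ} (hyG : y ≤ G)
    (hlow : allocLow c q G ≤ signedDeg fun l j => (y l j : ℤ))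
    (hcap : (signedDeg fun l j => (y l j : ℤ)) ≤ allocCap c q G) :
    IsAlloc c q y ∧ IsAlloc c q (G - y) := by
  have hZ : ∀ l j, (((G - y) l j : ℕ) : ℤ) = G l j - y l j := fun l j => by
    simp [Nat.cast_sub (hyG l j)]
  refine ⟨⟨fun l => ?_, fun j => ?_⟩, ⟨fun l => ?_, fun j => ?_⟩⟩
  · have h := hcap (.inl l)
    simp only [signedDeg, allocCap, Sum.elim_inl] at h
    exact_mod_cast h
  · have h := hlow (.inr j)
    simp only [signedDeg, allocLow, Sum.elim_inr, neg_le_neg_iff] at h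
    exact_mod_cast h
  · have h := hlow (.inl l)
    simp only [signedDeg, allocLow, Sum.elim_inl, tsub_le_iff_right] at h
    rw [← Nat.cast_le (α := ℤ), Nat.cast_sum]
    simp only [hZ, sum_sub_distrib]
    linarith
  · have h := hcap (.inr j)
    simp only [signedDeg, allocCap, Sum.elim_inr, neg_le_sub_iff_le_add] at h
    rw [← Nat.cast_le (α := ℤ), Nat.cast_sum]
    simp only [hZ, sum_sub_distrib]
    linarith

variable {u a : Fin n → Fin m → ℕ} {i k : Fin n}

theorem sum_sum_add_sum_le (hck : c k ≤ c i) (hai : ∀ j, a i j = 0) (ha : IsAlloc c q a)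
    (hu_col : ∀ j, ∑ l, u l j ≤ q j) {A : Finset (Fin n)} (hiA : i ∈ A) (C : Finset (Fin m)) :
    ∑ l ∈ A, ∑ j ∈ C, (u l j + a l j) + ∑ j ∈ C, a k j ≤ ∑ l ∈ A, c l + ∑ j ∈ C, q j := by
  have hu : ∑ l ∈ A, ∑ j ∈ C, u l j ≤ ∑ j ∈ C, q j := by
    rw [sum_comm]
    exact sum_le_sum fun j _ => (sum_le_sum_of_subset (subset_univ A)).trans (hu_col j)
  have ha_rows : ∑ l ∈ A, ∑ j ∈ C, a l j ≤ ∑ l ∈ A.erase i, c l := by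
    rw [← sum_erase A (a := i) (by simp [hai])]
    exact sum_le_sum fun l _ => (sum_le_sum_of_subset (subset_univ C)).trans (ha.1 l)
  have ha_k : ∑ j ∈ C, a k j ≤ c i :=
    ((sum_le_sum_of_subset (subset_univ C)).trans (ha.1 k)).trans hck
  have := sum_erase_add A c hiA
  simp only [sum_add_distrib]
  omega

theorem allocCap_cut_nonneg (hck : c k ≤ c i) (huk : ∀ j, u k j = 0) (hai : ∀ j, a i j = 0)
    (hu_col : ∀ j, ∑ l, u l j ≤ q j) (ha : IsAlloc c q a) (A : Finset (Fin n))
    (C : Finset (Fin m)) (hs : .inl i ∈ A.disjSum C) :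
    0 ≤ ∑ v ∈ A.disjSum C, allocCap c q (u + a) v +
      ∑ l ∈ Aᶜ, ∑ j ∈ C, if l = k then 0 else ((u + a) l j : ℤ) := by
  have hcount : ∑ l ∈ A, ∑ j ∈ C, ((u l j : ℤ) + a l j) + ∑ j ∈ C, (a k j : ℤ) ≤
      ∑ l ∈ A, (c l : ℤ) + ∑ j ∈ C, (q j : ℤ) := by
    exact_mod_cast sum_sum_add_sum_le hck hai ha hu_col (by simpa using hs) C
  have hrow : ∀ l, ∑ j ∈ C, ((u l j : ℤ) + a l j) ≤
      (∑ j ∈ C, if l = k then 0 else ((u + a) l j : ℤ)) +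
        if l = k then ∑ j ∈ C, (a k j : ℤ) else 0 := by
    intro l
    rcases eq_or_ne l k with rfl | hl <;> simp [*]
  have houtside : ∑ l ∈ Aᶜ, ∑ j ∈ C, ((u l j : ℤ) + a l j) ≤
      ∑ l ∈ Aᶜ, (∑ j ∈ C, if l = k then 0 else ((u + a) l j : ℤ)) + ∑ j ∈ C, (a k j : ℤ) := by
    refine (sum_le_sum fun l _ => hrow l).trans ?_
    rw [sum_add_distrib, sum_ite_eq']
    gcongr
    split_ifs
    exacts [le_rfl, by positivity]
  have hcols : ∑ j ∈ C, ∑ l, ((u l j : ℤ) + a l j) =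
      ∑ l ∈ A, ∑ j ∈ C, ((u l j : ℤ) + a l j) + ∑ l ∈ Aᶜ, ∑ j ∈ C, ((u l j : ℤ) + a l j) := by
    rw [sum_comm, sum_add_sum_compl]
  simp only [allocCap, sum_disjSum, Sum.elim_inl, Sum.elim_inr, sum_sub_distrib, Pi.add_apply,
    Nat.cast_add, hcols] at houtside ⊢
  linarith

theorem exists_isAlloc_add_eq (hck : c k ≤ c i) (huk : ∀ j, u k j = 0) (hai : ∀ j, a i j = 0)
    (hu_row : ∀ l ≠ i, ∑ j, u l j ≤ c l) (hu_row_i : ∑ j, u i j ≤ c i + c k)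
    (hu_col : ∀ j, ∑ l, u l j ≤ q j) (ha : IsAlloc c q a) :
    ∃ Y Z, Y + Z = u + a ∧ (∀ j, Y k j = 0) ∧ IsAlloc c q Y ∧ IsAlloc c q Z := by
  have hlow : allocLow c q (u + a) ≤ signedDeg fun l j => (u l j : ℤ) := by
    rintro (l | j)
    · simpa [allocLow, signedDeg, sum_add_distrib] using (by exact_mod_cast ha.1 l :
        (∑ j, (a l j : ℤ)) ≤ c l)
    · simpa [allocLow, signedDeg] using (by exact_mod_cast hu_col j :
        (∑ l, (u l j : ℤ)) ≤ q j)
  have hcap : ∀ v ≠ .inl i, signedDeg (fun l j => (u l j : ℤ)) v ≤ allocCap c q (u + a) v := by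
    rintro (l | j) hv
    · simpa [allocCap, signedDeg] using (by exact_mod_cast hu_row l (by simpa using hv) :
        (∑ j, (u l j : ℤ)) ≤ c l)
    · have : (∑ l, (a l j : ℤ)) ≤ q j := by exact_mod_cast ha.2 j
      simp only [signedDeg, allocCap, Sum.elim_inr, Pi.add_apply, Nat.cast_add, sum_add_distrib,
        neg_le_sub_iff_le_add]
      linarith
  have hs : allocLow c q (u + a) (.inl i) ≤ allocCap c q (u + a) (.inl i) := by
    have : (∑ j, (u i j : ℤ)) ≤ c i + c k := by exact_mod_cast hu_row_i
    have : (c k : ℤ) ≤ c i := by exact_mod_cast hck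
    simp only [allocLow, allocCap, Sum.elim_inl, Pi.add_apply, Nat.cast_add, hai, Nat.cast_zero,
      add_zero, tsub_le_iff_right]
    linarith
  -- the bound on `Y` is `u + a` with row `k` set to `0`: it keeps `Y` off agent `k` and `Z ≥ 0`
  obtain ⟨y, hy0, hyB, hylow, hycap⟩ :=
    exists_signedDeg_mem_Icc (allocCap_cut_nonneg hck huk hai hu_col ha) hs
      (fun l j => Nat.cast_nonneg _) (fun l j => by rcases eq_or_ne l k with rfl | hl <;> simp [*])
      hlow hcap
  lift y to Fin n → Fin m → ℕ using hy0
  have hyB' : ∀ l j, (y l j : ℤ) ≤ if l = k then 0 else ((u + a) l j : ℤ) := hyB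
  have hyG : y ≤ u + a := fun l j => by
    have hle : (if l = k then 0 else ((u + a) l j : ℤ)) ≤ (u + a) l j := by
      split_ifs
      exacts [Nat.cast_nonneg _, le_rfl]
    exact_mod_cast (hyB' l j).trans hle
  obtain ⟨hY, hZ⟩ := isAlloc_of_signedDeg_mem_Icc hyG hylow hycap
  exact ⟨y, u + a - y, add_tsub_cancel_of_le hyG, fun j => by simpa using hyB' k j, hY, hZ⟩

end Split

theorem allocVal_add {n m : ℕ} (w : Fin n → Fin m → ℝ) (a b : Fin n → Fin m → ℕ) :
    allocVal w (a + b) = allocVal w a + allocVal w b := by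
  simp [allocVal, add_mul, sum_add_distrib]

theorem allocVal_single {n m : ℕ} (w : Fin n → Fin m → ℝ) (l : Fin n) (r : Fin m → ℕ) :
    allocVal w (Pi.single l r) = ∑ j, (r j : ℝ) * w l j := by
  simp [allocVal, Pi.single_apply, ite_apply]

theorem exists_isAlloc_add_add_single_eq {n m : ℕ} {c : Fin n → ℕ} {q : Fin m → ℕ}
    {M a : Fin n → Fin m → ℕ} {i k : Fin n} (hik : i ≠ k) (hck : c k ≤ c i)
    (hM : IsAlloc c q M) (ha : IsAlloc c q a) (hai : ∀ j, a i j = 0) :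
    ∃ Y Z, Y + Z + Pi.single k (M k) = M + Pi.single i (M k) + a ∧ (∀ j, Y k j = 0) ∧
      IsAlloc c q Y ∧ IsAlloc c q Z := by
  set u := Function.update M k 0 + Pi.single i (M k)
  have hu : u + Pi.single k (M k) = M + Pi.single i (M k) := by
    ext l j
    rcases eq_or_ne l k with rfl | hlk <;> simp [u, Pi.single_apply, *]
  have hu_apply : ∀ l j, u l j = if l = k then 0 else M l j + if l = i then M k j else 0 := by
    intro l j
    rcases eq_or_ne l k with rfl | hlk <;> simp [u, Pi.single_apply, ite_apply, *]
  have hu_row : ∀ l ≠ i, ∑ j, u l j ≤ c l := fun l hli => by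
    rcases eq_or_ne l k with rfl | hlk
    · simp [hu_apply]
    · simpa [hu_apply, hli, hlk] using hM.1 l
  have hu_row_i : ∑ j, u i j ≤ c i + c k := by
    simpa [hu_apply, hik, sum_add_distrib] using add_le_add (hM.1 i) (hM.1 k)
  have hu_col : ∀ j, ∑ l, u l j ≤ q j := fun j => by
    have hcol : ∑ l, u l j = ∑ l, M l j := by
      simpa [sum_add_distrib, Pi.single_apply, ite_apply] using congrArg (fun f => ∑ l, f l j) hu
    exact hcol ▸ hM.2 j
  obtain ⟨Y, Z, hYZ, hYk, hY, hZ⟩ :=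
    exists_isAlloc_add_eq hck (by simp [hu_apply]) hai hu_row hu_row_i hu_col ha
  exact ⟨Y, Z, by rw [hYZ, add_right_comm, hu], hYk, hY, hZ⟩

theorem clarke_pivot_no_envy_of_capacity_le {n m : ℕ}
    (c : Fin n → ℕ) (q : Fin m → ℕ) (w : Fin n → Fin m → ℝ)
    (M : Fin n → Fin m → ℕ) (hM : IsAlloc c q M)
    (hMmax : ∀ a, IsAlloc c q a → allocVal w a ≤ allocVal w M)
    (Mex : Fin n → Fin n → Fin m → ℕ)
    (hMex : ∀ k, IsAlloc c q (Mex k) ∧ (∀ j, Mex k k j = 0) ∧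
      (∀ a, IsAlloc c q a → (∀ j, a k j = 0) → allocVal w a ≤ allocVal w (Mex k)))
    (p : Fin n → ℝ)
    (hp : ∀ k, p k = allocVal w (Mex k) - allocVal w M + ∑ j, (M k j : ℝ) * w k j)
    {i k : Fin n} (hck : c k ≤ c i) :
    (∑ j, (M k j : ℝ) * w i j) - p k ≤ (∑ j, (M i j : ℝ) * w i j) - p i := by
  rcases eq_or_ne i k with rfl | hik
  · exact le_rfl
  obtain ⟨hMex_i, hMex_ii, -⟩ := hMex i
  obtain ⟨Y, Z, hYZ, hYk, hY, hZ⟩ := exists_isAlloc_add_add_single_eq hik hck hM hMex_i hMex_ii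
  have hval := congrArg (allocVal w) hYZ
  simp only [allocVal_add, allocVal_single] at hval
  have := (hMex k).2.2 Y hY hYk
  have := hMmax Z hZ
  rw [hp i, hp k]
  linarith

theorem clarke_pivot_envy_free_homogeneous_general {n m : ℕ}
    (c : Fin n → ℕ) (q : Fin m → ℕ) (w : Fin n → Fin m → ℝ)
    (hc : ∀ i k, c i = c k)
    (M : Fin n → Fin m → ℕ) (hM : IsAlloc c q M)
    (hMmax : ∀ a, IsAlloc c q a → allocVal w a ≤ allocVal w M)
    (Mex : Fin n → Fin n → Fin m → ℕ)
    (hMex : ∀ k, IsAlloc c q (Mex k) ∧ (∀ j, Mex k k j = 0) ∧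
      (∀ a, IsAlloc c q a → (∀ j, a k j = 0) → allocVal w a ≤ allocVal w (Mex k)))
    (p : Fin n → ℝ)
    (hp : ∀ k, p k = allocVal w (Mex k) - allocVal w M + ∑ j, (M k j : ℝ) * w k j)
    (i k : Fin n) :
    (∑ j, (M k j : ℝ) * w i j) - p k ≤ (∑ j, (M i j : ℝ) * w i j) - p i :=
  clarke_pivot_no_envy_of_capacity_le c q w M hM hMmax Mex hMex p hp (hc k i).le

/-- If all agent capacities are equal, then the VCG mechanism with Clarke-pivot
payments is envy-free in the capacitated `b`-matching setting. -/
theorem clarke_pivot_envy_free_homogeneous {n m : ℕ}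
    (c : Fin n → ℕ) (q : Fin m → ℕ) (w : Fin n → Fin m → ℝ)
    (hw : ∀ i j, 0 ≤ w i j)
    (hc : ∀ i k, c i = c k)
    (M : Fin n → Fin m → ℕ) (hM : IsAlloc c q M)
    (hMmax : ∀ a, IsAlloc c q a → allocVal w a ≤ allocVal w M)
    (Mex : Fin n → Fin n → Fin m → ℕ)
    (hMex : ∀ k, IsAlloc c q (Mex k) ∧ (∀ j, Mex k k j = 0) ∧
      (∀ a, IsAlloc c q a → (∀ j, a k j = 0) → allocVal w a ≤ allocVal w (Mex k)))
    (p : Fin n → ℝ)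
    (hp : ∀ k, p k = allocVal w (Mex k) - allocVal w M + ∑ j, (M k j : ℝ) * w k j)
    (i k : Fin n) :
    (∑ j, (M k j : ℝ) * w i j) - p k ≤ (∑ j, (M i j : ℝ) * w i j) - p i :=
  clarke_pivot_envy_free_homogeneous_general c q w hc M hM hMmax Mex hMex p hp i k
end

section
/- For two agents with capacities 1 and 2 and two goods, no VCG mechanism is both envy-free and has no positive transfers. Precisely: agent 1 has capacity 1 and agent 2 has capacity 2 over goods Fin 2; for every function Opt selecting, for each profile of nonnegative per-item values w : Fin 2 → Fin 2 → ℝ, a pair of disjoint bundles (Opt_1(w), Opt_2(w)) maximizing v_1(S_1) + v_2(S_2) over disjoint pairs (where v_i is the capacitated valuation induced by w i with agent i's capacity), and for all functions h_1, h_2 from nonnegative value vectors in ℝ² to ℝ, the VCG mechanism with payments p_1(w) = h_1(w 2) − v_2(Opt_2(w)) and p_2(w) = h_2(w 1) − v_1(Opt_1(w)) fails at some profile w to satisfy both envy-freeness (for i ≠ k: v_i(Opt_i(w)) − p_i(w) ≥ v_i(Opt_k(w)) − p_k(w)) and no positive transfers (p_1(w) ≥ 0 and p_2(w) ≥ 0).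 -/
lemma le_capVal {G : Type*} [DecidableEq G] (w : G → ℝ) (c : ℕ) (S T : Finset G)
    (hT : T ⊆ S) (hc : T.card ≤ c) : ∑ j ∈ T, w j ≤ capVal w c S := by
  unfold capVal
  exact Finset.le_sup' (fun T => ∑ j ∈ T, w j)
    (by simp [Finset.mem_filter, Finset.mem_powerset, hT, hc])

lemma capVal_le {G : Type*} [DecidableEq G] (w : G → ℝ) (c : ℕ) (S : Finset G) (x : ℝ)
    (h : ∀ T ⊆ S, T.card ≤ c → ∑ j ∈ T, w j ≤ x) : capVal w c S ≤ x := by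
  unfold capVal
  apply Finset.sup'_le
  intro T hT
  simp only [Finset.mem_filter, Finset.mem_powerset] at hT
  exact h T hT.1 hT.2

lemma capVal_zero_fun {G : Type*} [DecidableEq G] (c : ℕ) (S : Finset G) :
    capVal (fun _ => (0:ℝ)) c S = 0 := by
  refine le_antisymm (capVal_le _ _ _ _ (by simp)) ?_
  simpa using le_capVal (fun _ => (0:ℝ)) c S ∅ (by simp) (by simp)

lemma capVal_empty {G : Type*} [DecidableEq G] (w : G → ℝ) (c : ℕ) :
    capVal w c (∅ : Finset G) = 0 := by
  refine le_antisymm (capVal_le _ _ _ _ ?_) ?_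
  · intro T hT _; simp [Finset.subset_empty.mp hT]
  · simpa using le_capVal w c ∅ ∅ (by simp) (by simp)

lemma capVal_const_one_le {t : ℝ} (ht : 0 ≤ t) (S : Finset (Fin 2)) :
    capVal (fun _ => t) 1 S ≤ t := by
  apply capVal_le
  intro T _ hc
  rw [Finset.sum_const, nsmul_eq_mul]
  calc (T.card : ℝ) * t ≤ 1 * t := by
        apply mul_le_mul_of_nonneg_right _ ht
        exact_mod_cast hc
    _ = t := one_mul t

lemma capVal_const_one {t : ℝ} (ht : 0 ≤ t) (S : Finset (Fin 2)) (hS : S.Nonempty) :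
    capVal (fun _ => t) 1 S = t := by
  refine le_antisymm (capVal_const_one_le ht S) ?_
  obtain ⟨j, hj⟩ := hS
  simpa using le_capVal (fun _ => t) 1 S {j} (by simpa) (by simp)

lemma capVal_const_two {t : ℝ} (ht : 0 ≤ t) (S : Finset (Fin 2)) :
    capVal (fun _ => t) 2 S = S.card * t := by
  refine le_antisymm (capVal_le _ _ _ _ ?_) ?_
  · intro T hT _
    rw [Finset.sum_const, nsmul_eq_mul]
    apply mul_le_mul_of_nonneg_right _ ht
    exact_mod_cast Finset.card_le_card hT
  · have h2 : S.card ≤ 2 := le_trans (Finset.card_le_univ S) (by simp)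
    simpa [Finset.sum_const, nsmul_eq_mul] using le_capVal (fun _ => t) 2 S S (le_refl S) h2

/-- For two agents with capacities 1 and 2 over two goods, no VCG mechanism is
both envy-free and without positive transfers: for every welfare-maximizing
allocation rule `Opt` and all pivot functions `h₁, h₂`, some nonnegative profile
`w` violates envy-freeness or no-positive-transfers. -/
theorem no_EF_NPT_VCG_capacities_one_two
    (Opt : (Fin 2 → Fin 2 → ℝ) → Finset (Fin 2) × Finset (Fin 2))
    (hOpt : ∀ w : Fin 2 → Fin 2 → ℝ, (∀ i j, 0 ≤ w i j) →
      Disjoint (Opt w).1 (Opt w).2 ∧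
      ∀ S₁ S₂ : Finset (Fin 2), Disjoint S₁ S₂ →
        capVal (w 0) 1 S₁ + capVal (w 1) 2 S₂ ≤
          capVal (w 0) 1 (Opt w).1 + capVal (w 1) 2 (Opt w).2)
    (h₁ h₂ : (Fin 2 → ℝ) → ℝ) :
    ∃ w : Fin 2 → Fin 2 → ℝ, (∀ i j, 0 ≤ w i j) ∧
      ¬ ((capVal (w 0) 1 (Opt w).2 -
            (h₂ (w 0) - capVal (w 0) 1 (Opt w).1) ≤
          capVal (w 0) 1 (Opt w).1 -
            (h₁ (w 1) - capVal (w 1) 2 (Opt w).2)) ∧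
         (capVal (w 1) 2 (Opt w).1 -
            (h₁ (w 1) - capVal (w 1) 2 (Opt w).2) ≤
          capVal (w 1) 2 (Opt w).2 -
            (h₂ (w 0) - capVal (w 0) 1 (Opt w).1)) ∧
         0 ≤ h₁ (w 1) - capVal (w 1) 2 (Opt w).2 ∧
         0 ≤ h₂ (w 0) - capVal (w 0) 1 (Opt w).1) := by
  by_contra hcon
  push_neg at hcon
  -- hcon : ∀ w, (∀ i j, 0 ≤ w i j) → EF1 ∧ EF2 ∧ NPT1 ∧ NPT2
  set c : ℝ := h₁ (fun _ => (0:ℝ)) with hc_def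
  -- Profile W0 : everything zero.  NPT1 gives 0 ≤ c.
  have hc0 : 0 ≤ c := by
    obtain ⟨-, -, hN1, -⟩ := hcon (fun _ _ => (0:ℝ)) (fun i j => le_refl 0)
    simpa [capVal_zero_fun, hc_def] using hN1
  set s : ℝ := c + 1 with hs_def
  set u : ℝ := c + 2 with hu_def
  have hs0 : 0 ≤ s := by simp only [hs_def]; linarith
  have hs0' : (0:ℝ) < s := by simp only [hs_def]; linarith
  have hu0 : 0 ≤ u := by simp only [hu_def]; linarith
  -- Profile W2 : agent 1 values (u,u), agent 2 values (0,0).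
  -- EF2 + NPT give  h₂(u,u) ≤ c + u.
  have hW2 : h₂ (fun _ => u) ≤ c + u := by
    have hnn : ∀ i j, 0 ≤ (![fun _ => u, fun _ => (0:ℝ)] : Fin 2 → Fin 2 → ℝ) i j := by
      intro i j
      fin_cases i <;> simp [hu0]
    obtain ⟨-, hEF2, -, -⟩ := hcon ![fun _ => u, fun _ => (0:ℝ)] hnn
    simp only [Matrix.cons_val_zero, Matrix.cons_val_one, Matrix.head_cons,
      capVal_zero_fun] at hEF2
    have hO1 : capVal (fun _ => u) 1 (Opt ![fun _ => u, fun _ => (0:ℝ)]).1 ≤ u :=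
      capVal_const_one_le hu0 _
    linarith
  -- Profile W1 : agent 1 values (u,u), agent 2 values (s,s) with u > s > 0.
  -- The optimum splits the goods; EF1 gives h₁(s,s) ≤ h₂(u,u) - u + s.
  have hW1 : h₁ (fun _ => s) ≤ h₂ (fun _ => u) - u + s := by
    set w : Fin 2 → Fin 2 → ℝ := ![fun _ => u, fun _ => s] with hw_def
    have hnn : ∀ i j, 0 ≤ w i j := by
      intro i j
      fin_cases i <;> simp [hw_def, hu0, hs0]
    have hw0 : w 0 = fun _ => u := by simp [hw_def]
    have hw1 : w 1 = fun _ => s := by simp [hw_def]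
    obtain ⟨hdisj, hmax⟩ := hOpt w hnn
    have hkey := hmax {0} {1} (by simp)
    simp only [hw0, hw1] at hkey
    rw [capVal_const_one hu0 _ (by simp), capVal_const_two hs0] at hkey
    have hO1le : capVal (fun _ => u) 1 (Opt w).1 ≤ u := capVal_const_one_le hu0 _
    -- (Opt w).2 has exactly one element
    have hcard2 : (Opt w).2.card ≤ 2 := le_trans (Finset.card_le_univ _) (by simp)
    have hcard : (Opt w).2.card = 1 := by
      rcases (show (Opt w).2.card = 0 ∨ (Opt w).2.card = 1 ∨ (Opt w).2.card = 2 by omega)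
        with h | h | h
      · exfalso
        rw [Finset.card_eq_zero] at h
        rw [h, capVal_empty] at hkey
        simp at hkey
        linarith
      · exact h
      · exfalso
        have huniv : (Opt w).2 = Finset.univ := Finset.eq_univ_of_card _ (by simp [h])
        have hO1e : (Opt w).1 = ∅ := by
          apply Finset.eq_empty_of_forall_notMem
          intro x hx
          exact (Finset.disjoint_left.mp hdisj hx) (huniv ▸ Finset.mem_univ x)
        rw [hO1e, capVal_empty, capVal_const_two hs0, h] at hkey
        simp only [hu_def, hs_def] at hkey
        norm_num at hkey
        linarith
    have hO2ne : (Opt w).2.Nonempty := Finset.card_pos.mp (by omega)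
    have hv1O2 : capVal (fun _ => u) 1 (Opt w).2 = u := capVal_const_one hu0 _ hO2ne
    have hv2O2 : capVal (fun _ => s) 2 (Opt w).2 = s := by
      rw [capVal_const_two hs0, hcard]; simp
    obtain ⟨hEF1, -, -, -⟩ := hcon w hnn
    simp only [hw0, hw1] at hEF1
    rw [hv1O2, hv2O2] at hEF1
    linarith
  -- Profile W3 : agent 1 values (0,0), agent 2 values (s,s).
  -- Optimality forces v₂((Opt).2) ≥ 2s, and NPT1 gives h₁(s,s) ≥ 2s.
  have hW3 : 2 * s ≤ h₁ (fun _ => s) := by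
    set w : Fin 2 → Fin 2 → ℝ := ![fun _ => (0:ℝ), fun _ => s] with hw_def
    have hnn : ∀ i j, 0 ≤ w i j := by
      intro i j
      fin_cases i <;> simp [hw_def, hs0]
    have hw0 : w 0 = fun _ => (0:ℝ) := by simp [hw_def]
    have hw1 : w 1 = fun _ => s := by simp [hw_def]
    obtain ⟨-, hmax⟩ := hOpt w hnn
    have hkey := hmax ∅ {0, 1} (by simp)
    simp only [hw0, hw1, capVal_zero_fun, capVal_empty] at hkey
    rw [capVal_const_two hs0, capVal_const_two hs0] at hkey
    obtain ⟨-, -, hN1, -⟩ := hcon w hnn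
    simp only [hw0, hw1] at hN1
    rw [capVal_const_two hs0] at hN1
    have hcards : ((({0, 1} : Finset (Fin 2)).card : ℝ)) = 2 := by norm_num
    rw [hcards] at hkey
    have hcard2 : ((Opt w).2.card : ℝ) ≤ 2 := by
      exact_mod_cast le_trans (Finset.card_le_univ _) (by simp)
    nlinarith [hs0]
  simp only [hs_def, hu_def] at hW1 hW3 hW2
  linarith
end

section
/- Let c_1 ≤ c_2 be capacities, let there be exactly m = c_1 + c_2 goods with nonnegative per-item values w_1, w_2 : Fin m → ℝ for agents 1 and 2, and let (S_1, S_2) be a partition of the goods with |S_1| = c_1 and |S_2| = c_2 maximizing Σ_{j∈S_1} w_1 j + Σ_{j∈S_2} w_2 j over all such partitions. Then (sum of the c_1 largest entries of w_1) − (sum of the c_1 largest entries of w_2) ≤ Σ_{j∈S_1} w_1 j − Σ_{j∈S_1} w_2 j. -/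
/-- The sum of the `min b m` largest entries of `x : Fin m → ℝ`, expressed as the
maximum over all subsets of cardinality `min b m` of the sum of entries. -/
noncomputable def topSum {m : ℕ} (b : ℕ) (x : Fin m → ℝ) : ℝ :=
  sSup {y : ℝ | ∃ T : Finset (Fin m), T.card = min b m ∧ y = ∑ j ∈ T, x j}

lemma topSum_exists_max {m : ℕ} (b : ℕ) (x : Fin m → ℝ) :
    ∃ A : Finset (Fin m), A.card = min b m ∧ topSum b x = ∑ j ∈ A, x j ∧
      ∀ T : Finset (Fin m), T.card = min b m → ∑ j ∈ T, x j ≤ ∑ j ∈ A, x j := by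
  set F := (Finset.univ : Finset (Fin m)).powersetCard (min b m) with hF
  have hFne : F.Nonempty := by
    apply Finset.powersetCard_nonempty.mpr
    simp [Nat.min_le_right]
  set G := F.image (fun T => ∑ j ∈ T, x j) with hG
  have hGne : G.Nonempty := hFne.image _
  have hset : {y : ℝ | ∃ T : Finset (Fin m), T.card = min b m ∧ y = ∑ j ∈ T, x j}
      = ↑G := by
    ext y
    simp only [Set.mem_setOf_eq, hG, Finset.coe_image, Set.mem_image,
      Finset.mem_coe, hF, Finset.mem_powersetCard_univ]
    constructor
    · rintro ⟨T, h1, h2⟩; exact ⟨T, h1, h2.symm⟩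
    · rintro ⟨T, h1, h2⟩; exact ⟨T, h1, h2.symm⟩
  have htop : topSum b x = G.max' hGne := by
    rw [topSum, hset, ← Finset.Nonempty.csSup_eq_max' hGne]
  have hmem := G.max'_mem hGne
  obtain ⟨A, hAF, hAsum⟩ := Finset.mem_image.mp hmem
  have hAF : A.card = min b m := Finset.mem_powersetCard_univ.mp hAF
  refine ⟨A, hAF, by rw [htop, hAsum], fun T hT => ?_⟩
  rw [hAsum]
  exact Finset.le_max' G _ (Finset.mem_image.mpr ⟨T, Finset.mem_powersetCard_univ.mpr hT, rfl⟩)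

/-- For capacities `c₁ ≤ c₂`, exactly `c₁ + c₂` goods, and an optimal partition
`(S₁, S₂)` with `|S₁| = c₁`, `|S₂| = c₂`, it holds that
`top_{c₁}(w₁) − top_{c₁}(w₂) ≤ ∑_{j∈S₁} w₁ j − ∑_{j∈S₁} w₂ j`. -/
theorem top_diff_le_opt_bundle_diff (c₁ c₂ : ℕ) (hc : c₁ ≤ c₂)
    (w₁ w₂ : Fin (c₁ + c₂) → ℝ) (hw₁ : ∀ j, 0 ≤ w₁ j) (hw₂ : ∀ j, 0 ≤ w₂ j)
    (S₁ S₂ : Finset (Fin (c₁ + c₂)))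
    (hdisj : Disjoint S₁ S₂) (hcover : S₁ ∪ S₂ = Finset.univ)
    (hcard₁ : S₁.card = c₁) (hcard₂ : S₂.card = c₂)
    (hopt : ∀ T₁ T₂ : Finset (Fin (c₁ + c₂)), Disjoint T₁ T₂ →
      T₁ ∪ T₂ = Finset.univ → T₁.card = c₁ → T₂.card = c₂ →
      (∑ j ∈ T₁, w₁ j) + (∑ j ∈ T₂, w₂ j) ≤
        (∑ j ∈ S₁, w₁ j) + (∑ j ∈ S₂, w₂ j)) :
    topSum c₁ w₁ - topSum c₁ w₂ ≤ (∑ j ∈ S₁, w₁ j) - (∑ j ∈ S₁, w₂ j) := by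
  have hmin : min c₁ (c₁ + c₂) = c₁ := Nat.min_eq_left (Nat.le_add_right _ _)
  obtain ⟨A, hAcard, hAtop, hAmax⟩ := topSum_exists_max c₁ w₁
  obtain ⟨B, hBcard, hBtop, hBmax⟩ := topSum_exists_max c₁ w₂
  rw [hmin] at hAcard hBcard
  -- topSum c₁ w₂ ≥ ∑ A w₂
  have h2 : ∑ j ∈ A, w₂ j ≤ topSum c₁ w₂ := by
    rw [hBtop]; exact hBmax A (by rw [hmin]; exact hAcard)
  -- use partition (A, Aᶜ)
  have hAc : Aᶜ.card = c₂ := by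
    rw [Finset.card_compl, hAcard, Fintype.card_fin]
    omega
  have hopt' := hopt A Aᶜ disjoint_compl_right (Finset.union_compl A) hAcard hAc
  have hsplitA : ∑ j ∈ Aᶜ, w₂ j = (∑ j, w₂ j) - ∑ j ∈ A, w₂ j := by
    have := Finset.sum_add_sum_compl A w₂
    linarith
  have hsplitS : ∑ j ∈ S₂, w₂ j = (∑ j, w₂ j) - ∑ j ∈ S₁, w₂ j := by
    have h := Finset.sum_union hdisj (f := w₂)
    rw [hcover] at h
    linarith
  rw [hsplitA, hsplitS] at hopt'
  rw [hAtop]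
  linarith
end

section
/- Let c_1 ≤ c_2 be capacities, let there be exactly m = c_1 + c_2 goods with nonnegative per-item values w_1, w_2 : Fin m → ℝ for agents 1 and 2, and let (S_1, S_2) be a partition of the goods with |S_1| = c_1 and |S_2| = c_2 maximizing Σ_{j∈S_1} w_1 j + Σ_{j∈S_2} w_2 j over all such partitions. Then (sum of the c_1 largest entries of w_2) − (sum of the c_1 largest entries of w_1) ≤ Σ_{j∈S_2} w_2 j − (sum of the c_1 largest values w_1 j over j ∈ S_2). -/
/-- The sum of the `min b |Y|` largest entries of `x` within the subset `Y`,
expressed as the maximum over all subsets `T ⊆ Y` of cardinality `min b |Y|`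
of the sum of entries. -/
noncomputable def topSumIn {m : ℕ} (b : ℕ) (x : Fin m → ℝ)
    (Y : Finset (Fin m)) : ℝ :=
  sSup {y : ℝ | ∃ T : Finset (Fin m), T ⊆ Y ∧ T.card = min b Y.card ∧
    y = ∑ j ∈ T, x j}

open Finset

section Exchange

variable {α : Type*} [DecidableEq α]

theorem card_sdiff_union_of_card_eq {s t u : Finset α} (hts : t ⊆ s) (hsu : Disjoint s u)
    (h : t.card = u.card) : (s \ t ∪ u).card = s.card := by
  rw [card_union_of_disjoint (hsu.mono_left sdiff_subset), card_sdiff_of_subset hts, ← h]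
  have := card_le_card hts
  omega

theorem sum_sdiff_union {β : Type*} [AddCommGroup β] (f : α → β) {s t u : Finset α}
    (hts : t ⊆ s) (hsu : Disjoint s u) :
    ∑ j ∈ s \ t ∪ u, f j = ∑ j ∈ s, f j - ∑ j ∈ t, f j + ∑ j ∈ u, f j := by
  rw [sum_union (hsu.mono_left sdiff_subset), sum_sdiff_eq_sub hts]

variable [Fintype α]

def MaximizesWelfare (w₁ w₂ : α → ℝ) (S₁ S₂ : Finset α) : Prop :=
  ∀ T₁ T₂ : Finset α, Disjoint T₁ T₂ → T₁ ∪ T₂ = univ → T₁.card = S₁.card →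
    T₂.card = S₂.card → ∑ j ∈ T₁, w₁ j + ∑ j ∈ T₂, w₂ j ≤ ∑ j ∈ S₁, w₁ j + ∑ j ∈ S₂, w₂ j

namespace MaximizesWelfare

variable {w₁ w₂ : α → ℝ} {S₁ S₂ : Finset α}

theorem exchange (hopt : MaximizesWelfare w₁ w₂ S₁ S₂) (hdisj : Disjoint S₁ S₂)
    (hcover : S₁ ∪ S₂ = univ) {B C : Finset α} (hB : B ⊆ S₁) (hC : C ⊆ S₂)
    (hBC : B.card = C.card) :
    ∑ j ∈ C, w₁ j + ∑ j ∈ B, w₂ j ≤ ∑ j ∈ B, w₁ j + ∑ j ∈ C, w₂ j := by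
  have hS₁C : Disjoint S₁ C := hdisj.mono_right hC
  have hS₂B : Disjoint S₂ B := (hdisj.mono_left hB).symm
  have hswap_disj : Disjoint (S₁ \ B ∪ C) (S₂ \ C ∪ B) := by
    simp only [disjoint_union_left, disjoint_union_right]
    exact ⟨⟨hdisj.mono sdiff_subset sdiff_subset, disjoint_sdiff⟩,
      ⟨sdiff_disjoint, (hdisj.mono hB hC).symm⟩⟩
  have hswap_cover : S₁ \ B ∪ C ∪ (S₂ \ C ∪ B) = univ := by
    rw [← hcover]
    ext j
    have := @hB j
    have := @hC j
    simp only [mem_union, mem_sdiff]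
    tauto
  have hswap := hopt _ _ hswap_disj hswap_cover (card_sdiff_union_of_card_eq hB hS₁C hBC)
    (card_sdiff_union_of_card_eq hC hS₂B hBC.symm)
  rw [sum_sdiff_union w₁ hB hS₁C, sum_sdiff_union w₂ hC hS₂B] at hswap
  linarith

theorem exists_card_eq_sum_add_le (hopt : MaximizesWelfare w₁ w₂ S₁ S₂)
    (hdisj : Disjoint S₁ S₂) (hcover : S₁ ∪ S₂ = univ) (hw₂ : ∀ j, 0 ≤ w₂ j)
    {A B : Finset α} (hA : A ⊆ S₂) (hB : B.card ≤ A.card) :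
    ∃ D : Finset α, D.card = A.card ∧
      ∑ j ∈ B, w₂ j + ∑ j ∈ A, w₁ j ≤ ∑ j ∈ S₂, w₂ j + ∑ j ∈ D, w₁ j := by
  set B₁ := B ∩ S₁
  set B₂ := B ∩ S₂
  have hB₁ : B₁ ⊆ S₁ := inter_subset_right
  have hB₂ : B₂ ⊆ S₂ := inter_subset_right
  have hB₁₂ : Disjoint B₁ B₂ := hdisj.mono hB₁ hB₂
  have hsplit : B₁ ∪ B₂ = B := by rw [← inter_union_distrib_left, hcover, inter_univ]
  have hcard : B₁.card + B₂.card = B.card := by rw [← card_union_of_disjoint hB₁₂, hsplit]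
  obtain ⟨C, hCsub, hCcard⟩ : ∃ C ⊆ A \ B₂, C.card = B₁.card := by
    refine exists_subset_card_eq ?_
    have := le_card_sdiff B₂ A
    omega
  have hCA : C ⊆ A := hCsub.trans sdiff_subset
  have hCS₂ : C ⊆ S₂ := hCA.trans hA
  have hAB₁ : Disjoint A B₁ := (hdisj.mono hB₁ hA).symm
  refine ⟨A \ C ∪ B₁, card_sdiff_union_of_card_eq hCA hAB₁ hCcard, ?_⟩
  have hexch := hopt.exchange hdisj hcover hB₁ hCS₂ hCcard.symm
  have hB₂C : ∑ j ∈ B₂, w₂ j + ∑ j ∈ C, w₂ j ≤ ∑ j ∈ S₂, w₂ j := by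
    rw [← sum_union (sdiff_disjoint.mono_left hCsub).symm]
    exact sum_le_sum_of_subset_of_nonneg (union_subset hB₂ hCS₂) fun j _ _ => hw₂ j
  rw [sum_sdiff_union w₁ hCA hAB₁, ← hsplit, sum_union hB₁₂]
  linarith

end MaximizesWelfare

end Exchange

section TopSum

variable {m b : ℕ} {x : Fin m → ℝ}

theorem le_topSum {T : Finset (Fin m)} (hT : T.card = min b m) :
    ∑ j ∈ T, x j ≤ topSum b x := by
  refine le_csSup ?_ ⟨T, hT, rfl⟩
  refine ((Set.finite_range fun T : Finset (Fin m) => ∑ j ∈ T, x j).subset ?_).bddAbove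
  rintro _ ⟨T, -, rfl⟩
  exact ⟨T, rfl⟩

theorem topSum_le {r : ℝ} (h : ∀ T : Finset (Fin m), T.card = min b m → ∑ j ∈ T, x j ≤ r) :
    topSum b x ≤ r := by
  refine csSup_le ?_ ?_
  · obtain ⟨T, -, hT⟩ := exists_subset_card_eq (s := (univ : Finset (Fin m))) (n := min b m)
      (by simp)
    exact ⟨_, T, hT, rfl⟩
  · rintro _ ⟨T, hT, rfl⟩
    exact h T hT

theorem exists_sum_eq_topSumIn (b : ℕ) (x : Fin m → ℝ) (Y : Finset (Fin m)) :
    ∃ A ⊆ Y, A.card = min b Y.card ∧ ∑ j ∈ A, x j = topSumIn b x Y := by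
  set s : Set ℝ := {y | ∃ T : Finset (Fin m), T ⊆ Y ∧ T.card = min b Y.card ∧ y = ∑ j ∈ T, x j}
  have hfin : s.Finite := by
    refine (Set.finite_range fun T : Finset (Fin m) => ∑ j ∈ T, x j).subset ?_
    rintro _ ⟨T, -, -, rfl⟩
    exact ⟨T, rfl⟩
  obtain ⟨T, hTY, hT⟩ := exists_subset_card_eq (min_le_right b Y.card)
  obtain ⟨A, hAY, hA, hsum⟩ := Set.Nonempty.csSup_mem (s := s) ⟨_, T, hTY, hT, rfl⟩ hfin
  exact ⟨A, hAY, hA, hsum.symm⟩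

end TopSum

theorem top_diff_le_opt_bundle_diff'_general (c₁ c₂ : ℕ) (hc : c₁ ≤ c₂)
    (w₁ w₂ : Fin (c₁ + c₂) → ℝ) (hw₂ : ∀ j, 0 ≤ w₂ j)
    (S₁ S₂ : Finset (Fin (c₁ + c₂)))
    (hdisj : Disjoint S₁ S₂) (hcover : S₁ ∪ S₂ = Finset.univ)
    (hcard₁ : S₁.card = c₁) (hcard₂ : S₂.card = c₂)
    (hopt : ∀ T₁ T₂ : Finset (Fin (c₁ + c₂)), Disjoint T₁ T₂ →
      T₁ ∪ T₂ = Finset.univ → T₁.card = c₁ → T₂.card = c₂ →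
      (∑ j ∈ T₁, w₁ j) + (∑ j ∈ T₂, w₂ j) ≤
        (∑ j ∈ S₁, w₁ j) + (∑ j ∈ S₂, w₂ j)) :
    topSum c₁ w₂ - topSum c₁ w₁ ≤ (∑ j ∈ S₂, w₂ j) - topSumIn c₁ w₁ S₂ := by
  have hmax : MaximizesWelfare w₁ w₂ S₁ S₂ := fun T₁ T₂ hd hu h₁ h₂ =>
    hopt T₁ T₂ hd hu (h₁.trans hcard₁) (h₂.trans hcard₂)
  have hmin : min c₁ (c₁ + c₂) = c₁ := min_eq_left (Nat.le_add_right _ _)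
  obtain ⟨A, hAS₂, hAcard, hA⟩ := exists_sum_eq_topSumIn c₁ w₁ S₂
  rw [hcard₂, min_eq_left hc] at hAcard
  suffices topSum c₁ w₂ ≤ ∑ j ∈ S₂, w₂ j + topSum c₁ w₁ - ∑ j ∈ A, w₁ j by linarith
  refine topSum_le fun B hB => ?_
  obtain ⟨D, hD, hle⟩ :=
    hmax.exists_card_eq_sum_add_le hdisj hcover hw₂ hAS₂ (by rw [hB, hmin, hAcard])
  have := le_topSum (x := w₁) (hD.trans (hAcard.trans hmin.symm))
  linarith

/-- For capacities `c₁ ≤ c₂`, exactly `c₁ + c₂` goods, and an optimal partition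
`(S₁, S₂)` with `|S₁| = c₁`, `|S₂| = c₂`, it holds that
`top_{c₁}(w₂) − top_{c₁}(w₁) ≤ ∑_{j∈S₂} w₂ j − top_{c₁}(w₁ | S₂)`. -/
theorem top_diff_le_opt_bundle_diff' (c₁ c₂ : ℕ) (hc : c₁ ≤ c₂)
    (w₁ w₂ : Fin (c₁ + c₂) → ℝ) (hw₁ : ∀ j, 0 ≤ w₁ j) (hw₂ : ∀ j, 0 ≤ w₂ j)
    (S₁ S₂ : Finset (Fin (c₁ + c₂)))
    (hdisj : Disjoint S₁ S₂) (hcover : S₁ ∪ S₂ = Finset.univ)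
    (hcard₁ : S₁.card = c₁) (hcard₂ : S₂.card = c₂)
    (hopt : ∀ T₁ T₂ : Finset (Fin (c₁ + c₂)), Disjoint T₁ T₂ →
      T₁ ∪ T₂ = Finset.univ → T₁.card = c₁ → T₂.card = c₂ →
      (∑ j ∈ T₁, w₁ j) + (∑ j ∈ T₂, w₂ j) ≤
        (∑ j ∈ S₁, w₁ j) + (∑ j ∈ S₂, w₂ j)) :
    topSum c₁ w₂ - topSum c₁ w₁ ≤ (∑ j ∈ S₂, w₂ j) - topSumIn c₁ w₁ S₂ :=
  top_diff_le_opt_bundle_diff'_general c₁ c₂ hc w₁ w₂ hw₂ S₁ S₂ hdisj hcover hcard₁ hcard₂ hopt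
end
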